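/- arXiv:2102.12304 — 10 statements merged into one kernel-verified Lean document; each statement's English description precedes it below -/
import Mathlib

section
/- For any integer j with 0 < j ≤ 2^k, the binary Hamming weight of j·(2^k − 1), reduced modulo 2^(2k) − 1 to a representative in [0, 2^(2k) − 1), equals k. -/
/-- Hamming weight of the representative of `m` modulo `2^n - 1` in `[0, 2^n - 1)`. -/
def wt (n : ℕ) (m : ℤ) : ℕ := (Nat.digits 2 ((m % (2 ^ n - 1)).toNat)).sum

lemma sumdiv (n : ℕ) : (Nat.digits 2 n).sum = n % 2 + (Nat.digits 2 (n / 2)).sum := by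
  rcases Nat.eq_zero_or_pos n with h | h
  · simp [h]
  · rw [Nat.digits_def' (by norm_num : 1 < 2) h]; simp

lemma compl_sum : ∀ k n, n < 2 ^ k →
    (Nat.digits 2 n).sum + (Nat.digits 2 (2 ^ k - 1 - n)).sum = k := by
  intro k
  induction k with
  | zero => intro n hn; interval_cases n; simp
  | succ k ih =>
    intro n hn
    have h2 : (2:ℕ) ^ (k+1) = 2 * 2 ^ k := by ring
    have hq : n / 2 < 2 ^ k := by omega
    have hmod : (2 ^ (k+1) - 1 - n) % 2 = 1 - n % 2 := by omega
    have hdiv : (2 ^ (k+1) - 1 - n) / 2 = 2 ^ k - 1 - n / 2 := by omega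
    rw [sumdiv n, sumdiv (2 ^ (k+1) - 1 - n), hmod, hdiv]
    have := ih (n / 2) hq
    omega

lemma split_sum : ∀ k a b, b < 2 ^ k →
    (Nat.digits 2 (a * 2 ^ k + b)).sum = (Nat.digits 2 a).sum + (Nat.digits 2 b).sum := by
  intro k
  induction k with
  | zero => intro a b hb; interval_cases b; simp
  | succ k ih =>
    intro a b hb
    have h3 : a * 2 ^ (k+1) = 2 * (a * 2 ^ k) := by ring
    have hmod : (a * 2 ^ (k+1) + b) % 2 = b % 2 := by omega
    have hdiv : (a * 2 ^ (k+1) + b) / 2 = a * 2 ^ k + b / 2 := by omega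
    rw [sumdiv (a * 2 ^ (k+1) + b), sumdiv b, hmod, hdiv, ih a (b / 2) (by omega)]
    omega

theorem stmt_0 (k : ℕ) (hk : 1 ≤ k) (j : ℕ) (hj : 0 < j) (hj2 : j ≤ 2 ^ k) :
    wt (2 * k) ((j : ℤ) * (2 ^ k - 1)) = k := by
  have hk2 : (2:ℕ) ≤ 2 ^ k := by
    calc (2:ℕ) = 2 ^ 1 := rfl
    _ ≤ 2 ^ k := Nat.pow_le_pow_right (by norm_num) hk
  have hN : ((j - 1) * 2 ^ k + (2 ^ k - j) : ℕ) < 2 ^ (2 * k) - 1 := by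
    have ht : (2:ℕ) ^ (2 * k) = 2 ^ k * 2 ^ k := by rw [two_mul, pow_add]
    have h1 : (1:ℕ) ≤ 2 ^ k * 2 ^ k := Nat.one_le_iff_ne_zero.mpr (by positivity)
    rw [ht]
    zify [hj, hj2, h1]
    have hj2' : (j:ℤ) ≤ 2 ^ k := by exact_mod_cast hj2
    have hk2' : (2:ℤ) ≤ 2 ^ k := by exact_mod_cast hk2
    nlinarith [mul_le_mul_of_nonneg_right hj2' (by linarith : (0:ℤ) ≤ 2 ^ k - 1)]
  have hval : ((j : ℤ) * (2 ^ k - 1)) % (2 ^ (2 * k) - 1)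
      = (((j - 1) * 2 ^ k + (2 ^ k - j) : ℕ) : ℤ) := by
    have heq : ((j : ℤ) * (2 ^ k - 1)) = (((j - 1) * 2 ^ k + (2 ^ k - j) : ℕ) : ℤ) := by
      rw [Nat.cast_add, Nat.cast_mul, Nat.cast_sub hj, Nat.cast_sub hj2]
      push_cast
      ring
    rw [heq]
    apply Int.emod_eq_of_lt (by positivity)
    have : (((2:ℕ) ^ (2 * k) - 1 : ℕ) : ℤ) = 2 ^ (2 * k) - 1 := by
      push_cast [Nat.one_le_two_pow]; ring
    rw [← this]
    exact_mod_cast hN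
  unfold wt
  rw [hval]
  rw [Int.toNat_natCast]
  rw [split_sum k (j - 1) (2 ^ k - j) (by omega)]
  have := compl_sum k (j - 1) (by omega)
  have hrw : 2 ^ k - 1 - (j - 1) = 2 ^ k - j := by omega
  rw [hrw] at this
  exact this
end

section
/- Let k ≥ 3 and α ∈ 𝔽_{2^k}. If the Kloosterman sum Σ_{x ∈ 𝔽_{2^k}^*} (−1)^{Tr^k_1(α x + x^{−1})} equals −1, then Tr^k_1(α) = 0. -/
/-!
Write `χ(a) = (-1)^Tr(a)`. For `α ≠ 0` the substitution `y = α x²` turns the summand into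
`χ(α (y + y⁻¹))`, and with `t = (y + 1)⁻¹` one has `y + y⁻¹ = (t² + t)⁻¹`. Since `t ↦ t² + t`
is two-to-one onto the kernel `W` of the trace (additive Hilbert 90), the Kloosterman sum
including the term `x = 0` (where `0⁻¹ = 0`) equals `2 ∑_{w ∈ W} χ(α w⁻¹)`, and the hypothesis
says that it vanishes. As `|W| = 2^(k-1)` is divisible by `4` for `k ≥ 3`, the number of `w ∈ W`
with `Tr(α w⁻¹) = 1` is even, so `Tr(α ∑_{w ∈ W} w⁻¹) = 0`. Finally `∑_{w ∈ W} w⁻¹ = 1`, by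
writing the indicator of `W` as `1 + ∑_i w^(2^i)` and using the vanishing of power sums over a
finite field.
-/

noncomputable instance (n : ℕ) : Fintype (GaloisField 2 n) := Fintype.ofFinite _
noncomputable instance (n : ℕ) : DecidableEq (GaloisField 2 n) := Classical.decEq _

open Finset Module

namespace CharTwo

variable {F : Type*} [Field F] [CharP F 2]

theorem sq_add_self_eq_zero_iff {t : F} : t ^ 2 + t = 0 ↔ t = 0 ∨ t = 1 := by
  rw [show t ^ 2 + t = t * (t + 1) by ring, mul_eq_zero, CharTwo.add_eq_zero]

theorem sq_add_self_eq_sq_add_self_iff {s t : F} :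
    s ^ 2 + s = t ^ 2 + t ↔ s = t ∨ s = t + 1 := by
  have h : s ^ 2 + s + (t ^ 2 + t) = (s + t) ^ 2 + (s + t) := by
    rw [CharTwo.add_sq]
    ring
  rw [← CharTwo.add_eq_zero, h, sq_add_self_eq_zero_iff, CharTwo.add_eq_zero,
    CharTwo.add_eq_iff_eq_add, add_comm 1 t]

theorem add_inv_eq_inv_sq_add_self (y : F) :
    y + y⁻¹ = ((y + 1)⁻¹ ^ 2 + (y + 1)⁻¹)⁻¹ := by
  rcases eq_or_ne y 0 with rfl | hy
  · simp [CharTwo.add_self_eq_zero]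
  rcases eq_or_ne (y + 1) 0 with hy1 | hy1
  · obtain rfl : y = 1 := CharTwo.add_eq_zero.mp hy1
    simp
  have h : (y + 1)⁻¹ ^ 2 + (y + 1)⁻¹ = y / (y + 1) ^ 2 := by
    field_simp
    linear_combination CharTwo.two_eq_zero (R := F)
  rw [h, inv_div]
  field_simp
  linear_combination (-y) * CharTwo.two_eq_zero (R := F)

end CharTwo

namespace FiniteField

section PowerSums

variable {K : Type*} [Field K] [Fintype K]

theorem sum_inv (hK : 2 < Fintype.card K) : ∑ x : K, x⁻¹ = 0 := by
  rw [show ∑ x : K, x⁻¹ = ∑ x : K, x from Equiv.sum_comp (Equiv.inv K) id]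
  simpa using sum_pow_lt_card_sub_one (K := K) 1 (by omega)

theorem sum_mul_inv : ∑ x : K, x * x⁻¹ = -1 := by
  classical
  have h (x : K) : x * x⁻¹ = 1 - if x = 0 then 1 else 0 := by
    split_ifs with hx <;> simp [hx]
  simp [h, sum_sub_distrib]

theorem sum_pow_mul_inv {d : ℕ} (hd : 2 ≤ d) (hdK : d < Fintype.card K) :
    ∑ x : K, x ^ d * x⁻¹ = 0 := by
  rw [← sum_pow_lt_card_sub_one (K := K) (d - 1) (by omega)]
  refine sum_congr rfl fun x _ => ?_
  rcases eq_or_ne x 0 with rfl | hx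
  · simp [zero_pow (by omega : d - 1 ≠ 0)]
  · rw [pow_sub₀ x hx (by omega), pow_one]

end PowerSums

section CharTwo

variable {F : Type*} [Field F] [Fintype F] [Algebra (ZMod 2) F]

local notation "Tr" => Algebra.trace (ZMod 2) F

theorem trace_sq (x : F) : Tr (x ^ 2) = Tr x := by
  simpa [ZMod.card] using
    Algebra.trace_eq_of_algEquiv (frobeniusAlgEquivOfAlgebraic (ZMod 2) F) x

theorem trace_sq_add_self (t : F) : Tr (t ^ 2 + t) = 0 := by
  rw [map_add, trace_sq, CharTwo.add_self_eq_zero]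

theorem algebraMap_trace_eq_sum_pow_two (x : F) :
    algebraMap (ZMod 2) F (Tr x) = ∑ i ∈ range (finrank (ZMod 2) F), x ^ 2 ^ i := by
  simpa using algebraMap_trace_eq_sum_pow (ZMod 2) F x

theorem finrank_ker_trace :
    finrank (ZMod 2) (LinearMap.ker (Tr)) = finrank (ZMod 2) F - 1 := by
  have h := LinearMap.finrank_range_add_finrank_ker (Tr)
  rw [LinearMap.range_eq_top.mpr (Algebra.trace_surjective (ZMod 2) F), finrank_top,
    finrank_self] at h
  omega

theorem card_filter_trace_eq_zero :
    #{x : F | Tr x = 0} = 2 ^ (finrank (ZMod 2) F - 1) := by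
  classical
  have h := card_eq_pow_finrank (K := ZMod 2) (V := LinearMap.ker (Tr))
  rw [ZMod.card, finrank_ker_trace] at h
  rw [← h, ← Fintype.card_subtype]
  exact Fintype.card_congr (Equiv.refl _)

variable (F) in
noncomputable def artinSchreier : F →ₗ[ZMod 2] F :=
  (frobeniusAlgEquivOfAlgebraic (ZMod 2) F).toLinearMap + LinearMap.id

@[simp]
theorem artinSchreier_apply (t : F) : artinSchreier F t = t ^ 2 + t := by
  simp [artinSchreier, ZMod.card]

variable [CharP F 2]

theorem ker_artinSchreier : LinearMap.ker (artinSchreier F) = (ZMod 2) ∙ (1 : F) := by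
  ext t
  rw [LinearMap.mem_ker, artinSchreier_apply, CharTwo.sq_add_self_eq_zero_iff,
    Submodule.mem_span_singleton]
  constructor
  · rintro (rfl | rfl)
    exacts [⟨0, zero_smul _ _⟩, ⟨1, one_smul _ _⟩]
  · rintro ⟨c, rfl⟩
    fin_cases c
    exacts [Or.inl (zero_smul _ _), Or.inr (one_smul _ _)]

theorem range_artinSchreier : LinearMap.range (artinSchreier F) = LinearMap.ker (Tr) := by
  apply Submodule.eq_of_le_of_finrank_eq
  · rintro _ ⟨t, rfl⟩
    rw [LinearMap.mem_ker, artinSchreier_apply, trace_sq_add_self]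
  · have h := LinearMap.finrank_range_add_finrank_ker (artinSchreier F)
    rw [ker_artinSchreier, finrank_span_singleton one_ne_zero] at h
    rw [finrank_ker_trace]
    omega

theorem exists_sq_add_self_eq_iff (c : F) : (∃ t, t ^ 2 + t = c) ↔ Tr c = 0 := by
  simpa using SetLike.ext_iff.mp (range_artinSchreier (F := F)) c

theorem card_filter_sq_add_self_eq [DecidableEq F] (c : F) :
    #{t : F | t ^ 2 + t = c} = if Tr c = 0 then 2 else 0 := by
  split_ifs with hc
  · obtain ⟨t₀, rfl⟩ := (exists_sq_add_self_eq_iff c).mpr hc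
    have hfiber : ({t : F | t ^ 2 + t = t₀ ^ 2 + t₀} : Finset F) = {t₀, t₀ + 1} := by
      ext t
      simp only [mem_filter, mem_univ, true_and, mem_insert, mem_singleton,
        CharTwo.sq_add_self_eq_sq_add_self_iff]
    rw [hfiber, card_pair (succ_ne_self t₀).symm]
  · exact card_eq_zero.mpr <| filter_eq_empty_iff.mpr fun t _ ht => hc (ht ▸ trace_sq_add_self t)

theorem sum_sq_add_self {M : Type*} [AddCommMonoid M] (g : F → M) :
    ∑ t, g (t ^ 2 + t) = 2 • ∑ w with Tr w = 0, g w := by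
  let _ : DecidableEq F := Classical.decEq F
  calc ∑ t, g (t ^ 2 + t) = ∑ w, ∑ t with t ^ 2 + t = w, g w := (sum_fiberwise' univ _ g).symm
    _ = ∑ w, (if Tr w = 0 then 2 else 0) • g w := by
      simp only [sum_const, card_filter_sq_add_self_eq]
    _ = 2 • ∑ w with Tr w = 0, g w := by
      rw [sum_filter, smul_sum]
      exact sum_congr rfl fun w _ => by split_ifs <;> simp

theorem sum_add_inv {M : Type*} [AddCommMonoid M] (f : F → M) :
    ∑ y, f (y + y⁻¹) = 2 • ∑ w with Tr w = 0, f w⁻¹ := by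
  rw [← sum_sq_add_self]
  exact Fintype.sum_equiv ((Equiv.addRight 1).trans (Equiv.inv F)) _ _
    fun y => by rw [CharTwo.add_inv_eq_inv_sq_add_self]; rfl

theorem sum_trace_mul_add_inv {M : Type*} [AddCommMonoid M] (g : ZMod 2 → M) {α : F}
    (hα : α ≠ 0) : ∑ x, g (Tr (α * x + x⁻¹)) = 2 • ∑ w with Tr w = 0, g (Tr (α * w⁻¹)) := by
  rw [← sum_add_inv fun v => g (Tr (α * v))]
  refine Fintype.sum_bijective (fun x => α * x ^ 2)
    ((mulLeft_bijective₀ α hα).comp (bijective_frobenius F 2)) _ _ fun x => ?_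
  rw [← trace_sq, CharTwo.add_sq, mul_add, mul_inv, mul_inv_cancel_left₀ hα, inv_pow, mul_pow,
    ← mul_assoc, ← sq]

theorem sum_inv_filter_trace_eq_zero (hF : 2 ≤ finrank (ZMod 2) F) :
    ∑ w with Tr w = 0, w⁻¹ = 1 := by
  set n := finrank (ZMod 2) F
  have hq : Fintype.card F = 2 ^ n := by rw [card_eq_pow_finrank (K := ZMod 2), ZMod.card]
  have h4 : 2 ^ 2 ≤ 2 ^ n := Nat.pow_le_pow_right two_pos hF
  have hind (w : F) :
      (if Tr w = 0 then w⁻¹ else 0) = w⁻¹ + ∑ i ∈ range n, w ^ 2 ^ i * w⁻¹ := by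
    rw [← sum_mul, ← algebraMap_trace_eq_sum_pow_two]
    obtain h | h : Tr w = 0 ∨ Tr w = 1 := by generalize Tr w = a; decide +revert
    · simp [h]
    · simp [h, CharTwo.add_self_eq_zero]
  have hvanish : ∀ i ∈ range (n - 1), ∑ w : F, w ^ 2 ^ (i + 1) * w⁻¹ = 0 := fun i hi =>
    sum_pow_mul_inv (Nat.le_self_pow (by omega) 2)
      (hq ▸ Nat.pow_lt_pow_right (by norm_num) (by rw [mem_range] at hi; omega))
  rw [sum_filter, sum_congr rfl fun w _ => hind w, sum_add_distrib, sum_comm,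
    show n = n - 1 + 1 by omega, sum_range_succ', sum_inv (by omega)]
  simp only [sum_eq_zero hvanish, pow_zero, pow_one, sum_mul_inv, zero_add, CharTwo.neg_eq]

end CharTwo

end FiniteField

theorem ZMod.sum_eq_zero_of_sum_neg_one_pow_eq_zero {ι : Type*} {s : Finset ι} {a : ι → ZMod 2}
    (hs : 4 ∣ #s) (h : ∑ i ∈ s, (-1 : ℤ) ^ (a i).val = 0) : ∑ i ∈ s, a i = 0 := by
  have hval : ∀ b : ZMod 2, (-1 : ℤ) ^ b.val = 1 - 2 * b.val := by decide
  simp only [hval, sum_sub_distrib, sum_const, nsmul_one, ← mul_sum] at h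
  rw [← Nat.cast_sum] at h
  obtain ⟨m, hm⟩ := hs
  have hN : ∑ i ∈ s, a i = ((∑ i ∈ s, (a i).val : ℕ) : ZMod 2) := by simp
  rw [hN, ZMod.natCast_eq_zero_iff_even]
  exact ⟨m, by omega⟩

open FiniteField in
theorem stmt_6 (k : ℕ) (hk : 3 ≤ k) (α : GaloisField 2 k)
    (h : (∑ x ∈ Finset.univ.erase (0 : GaloisField 2 k),
        (-1 : ℤ) ^ ((Algebra.trace (ZMod 2) (GaloisField 2 k) (α * x + x⁻¹)).val)) = -1) :
    Algebra.trace (ZMod 2) (GaloisField 2 k) α = 0 := by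
  rcases eq_or_ne α 0 with rfl | hα
  · exact map_zero _
  have hrank : finrank (ZMod 2) (GaloisField 2 k) = k := GaloisField.finrank 2 (by omega)
  have hfull :
      ∑ x, (-1 : ℤ) ^ (Algebra.trace (ZMod 2) (GaloisField 2 k) (α * x + x⁻¹)).val = 0 := by
    rw [← add_sum_erase _ _ (mem_univ 0), h]
    simp
  rw [sum_trace_mul_add_inv (fun a => (-1 : ℤ) ^ a.val) hα, smul_eq_zero] at hfull
  have hparity := ZMod.sum_eq_zero_of_sum_neg_one_pow_eq_zero
    (by rw [card_filter_trace_eq_zero, hrank]; exact pow_dvd_pow 2 (by omega : 2 ≤ k - 1))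
    (hfull.resolve_left two_ne_zero)
  rwa [← map_sum, ← mul_sum, sum_inv_filter_trace_eq_zero (by omega), mul_one] at hparity
end

section
/- Let n = 2k with k ≥ 3 and d = 2^k − 1. Then min over 0 < j < 2^n − 1 of V_d(j) := wt(j) + wt(−jd) equals 2, and the set of minimizers is exactly {2^i · (2^k + 1) : 0 ≤ i ≤ k − 1}. -/
/-- `V_d(j) = wt(j) + wt(-jd)` (weights taken modulo `2^n - 1` with `n = 2k`). -/
def Vd (n d j : ℕ) : ℕ := wt n (j : ℤ) + wt n (-((j : ℤ) * (d : ℤ)))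

def dsum (x : ℕ) : ℕ := (Nat.digits 2 x).sum

lemma dsum_zero : dsum 0 = 0 := by simp [dsum]

lemma dsum_def (x : ℕ) (hx : 0 < x) : dsum x = x % 2 + dsum (x / 2) := by
  unfold dsum
  rw [Nat.digits_def' (by norm_num : 1 < 2) hx, List.sum_cons]

lemma dsum_eq_zero_iff (x : ℕ) : dsum x = 0 ↔ x = 0 := by
  induction x using Nat.strong_induction_on with
  | _ x ih =>
  rcases Nat.eq_zero_or_pos x with rfl | hx
  · simp [dsum_zero]
  rw [dsum_def x hx]
  constructor
  · intro h
    have h2 := (ih (x/2) (by omega)).mp (by omega)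
    omega
  · omega

lemma dsum_pos (x : ℕ) (hx : 0 < x) : 0 < dsum x := by
  rcases Nat.eq_zero_or_pos (dsum x) with h | h
  · rw [dsum_eq_zero_iff] at h; omega
  · exact h

lemma dsum_two_mul (x : ℕ) : dsum (2 * x) = dsum x := by
  rcases Nat.eq_zero_or_pos x with rfl | hx
  · rfl
  · rw [dsum_def _ (by omega), Nat.mul_mod_right, Nat.mul_div_cancel_left _ (by norm_num),
      zero_add]

lemma dsum_pow_mul (a x : ℕ) : dsum (2 ^ a * x) = dsum x := by
  induction a with
  | zero => simp
  | succ n ih => rw [pow_succ, mul_comm (2^n) 2, mul_assoc, dsum_two_mul, ih]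

lemma dsum_eq_one_iff (x : ℕ) : dsum x = 1 ↔ ∃ a, x = 2 ^ a := by
  induction x using Nat.strong_induction_on with
  | _ x ih =>
  rcases Nat.eq_zero_or_pos x with rfl | hx
  · simp [dsum_zero]
    intro a h; exact (pow_ne_zero a (by norm_num)) h.symm
  rw [dsum_def x hx]
  rcases Nat.even_or_odd x with he | ho
  · have h2 : x % 2 = 0 := Nat.even_iff.mp he
    rw [h2, zero_add, ih (x/2) (by omega)]
    constructor
    · rintro ⟨a, ha⟩; exact ⟨a+1, by omega⟩
    · rintro ⟨a, rfl⟩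
      rcases Nat.eq_zero_or_pos a with rfl | hap
      · simp at h2
      · refine ⟨a - 1, ?_⟩
        have e : a = (a-1) + 1 := by omega
        conv_lhs => rw [e, pow_succ]
        omega
  · have h2 : x % 2 = 1 := Nat.odd_iff.mp ho
    rw [h2]
    constructor
    · intro h
      have h3 : x / 2 = 0 := (dsum_eq_zero_iff _).mp (by omega)
      exact ⟨0, by omega⟩
    · rintro ⟨a, rfl⟩
      rcases Nat.eq_zero_or_pos a with rfl | hap
      · simp [dsum_zero]
      · exfalso
        have : (2:ℕ) ∣ 2 ^ a := dvd_pow_self 2 (by omega)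
        omega

lemma dsum_pow (a : ℕ) : dsum (2 ^ a) = 1 := (dsum_eq_one_iff _).mpr ⟨a, rfl⟩

lemma dsum_two_pows (a b : ℕ) (hab : a < b) : dsum (2 ^ a + 2 ^ b) = 2 := by
  have : 2 ^ a + 2 ^ b = 2 ^ a * (1 + 2 ^ (b - a)) := by
    rw [mul_add, mul_one, ← pow_add]; congr 2; omega
  rw [this, dsum_pow_mul, dsum_def _ (by positivity)]
  have h1 : (1 + 2 ^ (b-a)) % 2 = 1 := by
    have : (2:ℕ) ∣ 2 ^ (b-a) := dvd_pow_self 2 (by omega)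
    omega
  have h2 : (1 + 2 ^ (b-a)) / 2 = 2 ^ (b - a - 1) := by
    have e : b - a = (b - a - 1) + 1 := by omega
    conv_lhs => rw [e, pow_succ]
    omega
  rw [h1, h2, dsum_pow]

lemma dsum_eq_two (x : ℕ) (h : dsum x = 2) : ∃ a b, a < b ∧ x = 2 ^ a + 2 ^ b := by
  induction x using Nat.strong_induction_on with
  | _ x ih =>
  rcases Nat.eq_zero_or_pos x with rfl | hx
  · rw [dsum_zero] at h; omega
  rw [dsum_def x hx] at h
  rcases Nat.even_or_odd x with he | ho
  · have h2 : x % 2 = 0 := Nat.even_iff.mp he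
    obtain ⟨a, b, hab, hx2⟩ := ih (x/2) (by omega) (by omega)
    exact ⟨a+1, b+1, by omega, by rw [pow_succ, pow_succ]; omega⟩
  · have h2 : x % 2 = 1 := Nat.odd_iff.mp ho
    have h3 : dsum (x/2) = 1 := by omega
    obtain ⟨c, hc⟩ := (dsum_eq_one_iff _).mp h3
    exact ⟨0, c+1, by omega, by rw [pow_succ]; simp; omega⟩

lemma wt_eq_dsum (n : ℕ) (m : ℤ) : wt n m = dsum ((m % (2 ^ n - 1)).toNat) := rfl

-- divisor lemma: e in [1, 2k), (2^k+1) | 2^e + 1 → e = k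
lemma div_pow_add_one (k e : ℕ) (hk : 1 ≤ k) (he1 : 1 ≤ e) (he2 : e < 2 * k)
    (h : 2 ^ k + 1 ∣ 2 ^ e + 1) : e = k := by
  rcases lt_trichotomy e k with hlt | heq | hgt
  · exfalso
    have hle := Nat.le_of_dvd (by positivity) h
    have : (2:ℕ) ^ e < 2 ^ k := Nat.pow_lt_pow_right (by norm_num) hlt
    omega
  · exact heq
  · exfalso
    have h2 : 2 ^ k + 1 ∣ 2 ^ (e - k) * (2 ^ k + 1) := Dvd.intro_left _ rfl
    have h3 : 2 ^ (e - k) * (2 ^ k + 1) = 2 ^ e + 2 ^ (e - k) := by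
      rw [mul_add, mul_one, ← pow_add]
      congr 2
      omega
    have h4 : 2 ^ k + 1 ∣ 2 ^ (e - k) - 1 := by
      have := Nat.dvd_sub (h3 ▸ h2) h
      have he : 2 ^ e + 2 ^ (e - k) - (2 ^ e + 1) = 2 ^ (e - k) - 1 := by omega
      rwa [he] at this
    have h5 : 0 < 2 ^ (e - k) - 1 := by
      have : (2:ℕ)^1 ≤ 2 ^ (e - k) := Nat.pow_le_pow_right (by norm_num) (by omega)
      omega
    have h6 := Nat.le_of_dvd h5 h4
    have h7 : (2:ℕ) ^ (e - k) ≤ 2 ^ k := Nat.pow_le_pow_right (by norm_num) (by omega)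
    omega

lemma pow_cycle (n e : ℕ) (hn : 0 < n) :
    (2:ℤ) ^ e ≡ 2 ^ (e % n) [ZMOD ((2:ℤ) ^ n - 1)] := by
  have h1 : ((2:ℤ) ^ n) ≡ 1 [ZMOD ((2:ℤ) ^ n - 1)] := by
    rw [Int.modEq_iff_dvd]
    exact ⟨-1, by ring⟩
  calc (2:ℤ) ^ e = ((2:ℤ) ^ n) ^ (e / n) * 2 ^ (e % n) := by
        rw [← pow_mul, ← pow_add]
        congr 1
        exact (Nat.div_add_mod e n).symm
    _ ≡ 1 ^ (e / n) * 2 ^ (e % n) [ZMOD ((2:ℤ) ^ n - 1)] := (h1.pow _).mul_right _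
    _ = 2 ^ (e % n) := by ring

lemma key (k : ℕ) (hk : 3 ≤ k) (j : ℕ) (hj0 : 0 < j) (hjN : j < 2 ^ (2 * k) - 1) :
    2 ≤ Vd (2 * k) (2 ^ k - 1) j ∧
      (Vd (2 * k) (2 ^ k - 1) j = 2 ↔ ∃ i ≤ k - 1, j = 2 ^ i * (2 ^ k + 1)) := by
  have hk1 : (1:ℕ) ≤ 2 ^ k := Nat.one_le_two_pow
  have hk2 : (2:ℕ) ^ 2 ≤ 2 ^ k := Nat.pow_le_pow_right (by norm_num) (by omega)
  have h2k : (1:ℕ) ≤ 2 ^ (2 * k) := Nat.one_le_two_pow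
  have hpow2k : (2:ℕ) ^ (2 * k) = 2 ^ k * 2 ^ k := by rw [two_mul, pow_add]
  -- factorization N = (2^k - 1)(2^k + 1)
  have hfact : 2 ^ (2 * k) - 1 = (2 ^ k - 1) * (2 ^ k + 1) := by
    obtain ⟨b, hb⟩ : ∃ b, 2 ^ k = b + 1 := ⟨2 ^ k - 1, by omega⟩
    have h1 : (b + 1) * (b + 1) = b * b + 2 * b + 1 := by ring
    have h2 : (b + 1 - 1) * (b + 1 + 1) = b * b + 2 * b := by
      simp; ring
    rw [hpow2k, hb, h1, h2]
    omega
  -- cast facts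
  have hNc : (((2 ^ (2 * k) - 1 : ℕ)) : ℤ) = (2:ℤ) ^ (2 * k) - 1 := by push_cast [h2k]; ring
  have hDc : (((2 ^ k - 1 : ℕ)) : ℤ) = (2:ℤ) ^ k - 1 := by push_cast [hk1]; ring
  have h2k' : (2:ℕ) ≤ 2 ^ (2 * k) := by
    have : (2:ℕ) ^ 1 ≤ 2 ^ (2 * k) := Nat.pow_le_pow_right (by norm_num) (by omega)
    omega
  have hNpos : (0:ℤ) < (2:ℤ) ^ (2 * k) - 1 := by
    rw [← hNc]; exact_mod_cast (by omega : 0 < 2 ^ (2 * k) - 1)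
  -- wt of j itself
  have hwtj : wt (2 * k) (j : ℤ) = dsum j := by
    rw [wt_eq_dsum]
    have hjlt : (j:ℤ) < (2:ℤ) ^ (2 * k) - 1 := by rw [← hNc]; exact_mod_cast hjN
    rw [Int.emod_eq_of_lt (by positivity) hjlt, Int.toNat_natCast]
  -- divisibility criterion
  have hdvd_iff : ((2:ℤ) ^ (2 * k) - 1) ∣ (-((j : ℤ) * ((2 ^ k - 1 : ℕ) : ℤ))) ↔
      (2 ^ k + 1) ∣ j := by
    rw [dvd_neg, ← hNc, ← Nat.cast_mul, Int.natCast_dvd_natCast, hfact, mul_comm j _]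
    constructor
    · intro h
      exact (mul_dvd_mul_iff_left (by omega : (2:ℕ)^k - 1 ≠ 0)).mp h
    · intro h
      exact mul_dvd_mul_left _ h
  -- reverse direction of the iff, usable in all cases
  have hrev : ∀ i ≤ k - 1, j = 2 ^ i * (2 ^ k + 1) → Vd (2 * k) (2 ^ k - 1) j = 2 := by
    intro i hi hj
    have hjd : ((2:ℤ) ^ (2 * k) - 1) ∣ (-((j : ℤ) * ((2 ^ k - 1 : ℕ) : ℤ))) := by
      rw [hdvd_iff, hj]
      exact Dvd.dvd.mul_left dvd_rfl _
    have hwt2 : wt (2 * k) (-((j : ℤ) * ((2 ^ k - 1 : ℕ) : ℤ))) = 0 := by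
      rw [wt_eq_dsum, Int.emod_eq_zero_of_dvd hjd]
      simp [dsum]
    have hjsplit : j = 2 ^ i + 2 ^ (i + k) := by
      rw [hj, mul_add, mul_one, ← pow_add, add_comm (2 ^ (i + k))]
    unfold Vd
    rw [hwt2, hwtj, hjsplit, dsum_two_pows i (i + k) (by omega)]
  by_cases hdvd : (2 ^ k + 1) ∣ j
  · -- wt(-jd) = 0, Vd = dsum j ≥ 2
    have hwt2 : wt (2 * k) (-((j : ℤ) * ((2 ^ k - 1 : ℕ) : ℤ))) = 0 := by
      rw [wt_eq_dsum, Int.emod_eq_zero_of_dvd (hdvd_iff.mpr hdvd)]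
      simp [dsum]
    have hVd : Vd (2 * k) (2 ^ k - 1) j = dsum j := by unfold Vd; rw [hwt2, hwtj, Nat.add_zero]
    have hds1 : dsum j ≠ 1 := by
      intro h1
      obtain ⟨a, rfl⟩ := (dsum_eq_one_iff j).mp h1
      have hcop : Nat.Coprime (2 ^ k + 1) (2 ^ a) := by
        apply Nat.Coprime.pow_right
        have h2 : ¬ (2 ∣ 2 ^ k + 1) := by
          have : (2:ℕ) ∣ 2 ^ k := dvd_pow_self 2 (by omega)
          omega
        exact ((Nat.prime_two.coprime_iff_not_dvd).mpr h2).symm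
      have := hcop.eq_one_of_dvd hdvd
      omega
    have hge : 2 ≤ dsum j := by
      have := dsum_pos j hj0
      omega
    refine ⟨by omega, ?_⟩
    constructor
    · intro hVd2
      rw [hVd] at hVd2
      obtain ⟨a, b, hab, hjab⟩ := dsum_eq_two j hVd2
      have hblt : b < 2 * k := by
        have h1 : (2:ℕ) ^ b ≤ j := by rw [hjab]; exact Nat.le_add_left _ _
        have h2 : (2:ℕ) ^ b < 2 ^ (2 * k) := by omega
        exact (Nat.pow_lt_pow_iff_right (by norm_num)).mp h2
      have hdvd2 : (2 ^ k + 1) ∣ 2 ^ (b - a) + 1 := by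
        have hsplit : j = 2 ^ a * (2 ^ (b - a) + 1) := by
          have hba : a + (b - a) = b := by omega
          rw [mul_add, mul_one, ← pow_add, hba, hjab]
          omega
        have hcop : Nat.Coprime (2 ^ k + 1) (2 ^ a) := by
          apply Nat.Coprime.pow_right
          have h2 : ¬ (2 ∣ 2 ^ k + 1) := by
            have : (2:ℕ) ∣ 2 ^ k := dvd_pow_self 2 (by omega)
            omega
          exact ((Nat.prime_two.coprime_iff_not_dvd).mpr h2).symm
        rw [hsplit] at hdvd
        exact hcop.dvd_of_dvd_mul_left hdvd
      have heq : b - a = k := by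
        exact div_pow_add_one k (b - a) (by omega) (by omega) (by omega) hdvd2
      refine ⟨a, by omega, ?_⟩
      rw [mul_add, mul_one, ← pow_add, hjab, add_comm (2 ^ (a + k))]
      congr 2
      omega
    · rintro ⟨i, hi, hj⟩
      exact hrev i hi hj
  · -- both weights are at least 1; show Vd = 2 is impossible
    set r : ℕ := ((-((j : ℤ) * ((2 ^ k - 1 : ℕ) : ℤ))) % ((2:ℤ) ^ (2 * k) - 1)).toNat with hr
    have hwt2 : wt (2 * k) (-((j : ℤ) * ((2 ^ k - 1 : ℕ) : ℤ))) = dsum r := rfl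
    have hrz : (r : ℤ) = (-((j : ℤ) * ((2 ^ k - 1 : ℕ) : ℤ))) % ((2:ℤ) ^ (2 * k) - 1) :=
      Int.toNat_of_nonneg (Int.emod_nonneg _ (by omega))
    have hrpos : 0 < r := by
      rcases Nat.eq_zero_or_pos r with h0 | h
      · exfalso
        apply hdvd
        rw [← hdvd_iff]
        apply Int.dvd_of_emod_eq_zero
        rw [← hrz, h0, Nat.cast_zero]
      · exact h
    have hrlt : r < 2 ^ (2 * k) - 1 := by
      have := Int.emod_lt_of_pos (-((j : ℤ) * ((2 ^ k - 1 : ℕ) : ℤ))) hNpos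
      rw [← hrz, ← hNc] at this
      exact_mod_cast this
    have hkey : ((2:ℤ) ^ (2 * k) - 1) ∣ ((j : ℤ) * ((2 ^ k - 1 : ℕ) : ℤ) + r) := by
      have hde := Int.mul_ediv_add_emod (-((j : ℤ) * ((2 ^ k - 1 : ℕ) : ℤ))) ((2:ℤ) ^ (2 * k) - 1)
      refine ⟨-((-((j : ℤ) * ((2 ^ k - 1 : ℕ) : ℤ))) / ((2:ℤ) ^ (2 * k) - 1)), ?_⟩
      rw [← hrz] at hde
      have : ((2:ℤ) ^ (2 * k) - 1) * -((-((j : ℤ) * ((2 ^ k - 1 : ℕ) : ℤ))) / ((2:ℤ) ^ (2 * k) - 1)) =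
          -(((2:ℤ) ^ (2 * k) - 1) * ((-((j : ℤ) * ((2 ^ k - 1 : ℕ) : ℤ))) / ((2:ℤ) ^ (2 * k) - 1))) := by
        ring
      rw [this]
      omega
    refine ⟨?_, ?_⟩
    · unfold Vd
      rw [hwtj, hwt2]
      have := dsum_pos j hj0
      have := dsum_pos r hrpos
      omega
    constructor
    · -- Vd = 2 leads to contradiction
      intro hVd2
      exfalso
      unfold Vd at hVd2
      rw [hwtj, hwt2] at hVd2
      have hd1 : dsum j = 1 := by
        have := dsum_pos j hj0
        have := dsum_pos r hrpos
        omega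
      have hd2 : dsum r = 1 := by
        have := dsum_pos j hj0
        omega
      obtain ⟨a, rfl⟩ := (dsum_eq_one_iff j).mp hd1
      obtain ⟨c, hc⟩ := (dsum_eq_one_iff r).mp hd2
      have halt : a < 2 * k := by
        have : (2:ℕ) ^ a < 2 ^ (2 * k) := by omega
        exact (Nat.pow_lt_pow_iff_right (by norm_num)).mp this
      have hclt : c < 2 * k := by
        have h1 : (2:ℕ) ^ c < 2 ^ (2 * k) := by omega
        exact (Nat.pow_lt_pow_iff_right (by norm_num)).mp h1
      -- key : N | 2^a * (2^k - 1) + 2^c  (as integers)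
      rw [hc] at hkey
      set c' : ℕ := (2 * k - a + c) % (2 * k) with hc'
      have hc'lt : c' < 2 * k := Nat.mod_lt _ (by omega)
      have hstep : ((2:ℤ) ^ (2 * k) - 1) ∣ (((2 ^ k - 1 : ℕ) : ℤ) + 2 ^ c') := by
        have h1 : ((2:ℤ) ^ (2 * k) - 1) ∣
            (2:ℤ) ^ (2 * k - a) * (((2 ^ a : ℕ) : ℤ) * ((2 ^ k - 1 : ℕ) : ℤ) + ((2 ^ c : ℕ) : ℤ)) :=
          Dvd.dvd.mul_left hkey _
        have h2 : (2:ℤ) ^ (2 * k - a) * (((2 ^ a : ℕ) : ℤ) * ((2 ^ k - 1 : ℕ) : ℤ) + ((2 ^ c : ℕ) : ℤ)) =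
            (2:ℤ) ^ (2 * k) * ((2 ^ k - 1 : ℕ) : ℤ) + 2 ^ (2 * k - a + c) := by
          push_cast
          have e : 2 * k - a + a = 2 * k := by omega
          rw [mul_add, ← mul_assoc, ← pow_add, ← pow_add, e]
        rw [h2] at h1
        have h3 : ((2:ℤ) ^ (2 * k) * ((2 ^ k - 1 : ℕ) : ℤ) + 2 ^ (2 * k - a + c)) ≡
            (1 * ((2 ^ k - 1 : ℕ) : ℤ) + 2 ^ c') [ZMOD ((2:ℤ) ^ (2 * k) - 1)] := by
          apply Int.ModEq.add
          · apply Int.ModEq.mul_right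
            rw [Int.modEq_iff_dvd]
            exact ⟨-1, by ring⟩
          · exact pow_cycle (2 * k) (2 * k - a + c) (by omega)
        have h4 := (Int.modEq_zero_iff_dvd.mpr h1).symm.trans h3
        rw [one_mul] at h4
        exact Int.modEq_zero_iff_dvd.mp h4.symm
      -- but 0 < 2^k - 1 + 2^c' < 2^(2k) - 1
      have hnat : (2 ^ (2 * k) - 1 : ℕ) ∣ (2 ^ k - 1 + 2 ^ c') := by
        have : (((2 ^ k - 1 + 2 ^ c' : ℕ)) : ℤ) = ((2 ^ k - 1 : ℕ) : ℤ) + 2 ^ c' := by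
          push_cast
          ring
        rw [← hNc, ← this] at hstep
        exact_mod_cast hstep
      have hle := Nat.le_of_dvd (by positivity) hnat
      have e3 : (2:ℕ) ^ k ≤ 2 ^ (2 * k - 2) := Nat.pow_le_pow_right (by norm_num) (by omega)
      have e4 : (2:ℕ) ^ c' ≤ 2 ^ (2 * k - 1) := Nat.pow_le_pow_right (by norm_num) (by omega)
      have e1 : (2:ℕ) ^ (2 * k) = 2 ^ (2 * k - 1) * 2 := by
        rw [← pow_succ]
        congr 1
        omega
      have e2 : (2:ℕ) ^ (2 * k - 1) = 2 ^ (2 * k - 2) * 2 := by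
        rw [← pow_succ]
        congr 1
        omega
      omega
    · rintro ⟨i, hi, hj⟩
      exact hrev i hi hj


theorem stmt_7 (k : ℕ) (hk : 3 ≤ k) :
    (∀ j : ℕ, 0 < j → j < 2 ^ (2 * k) - 1 → 2 ≤ Vd (2 * k) (2 ^ k - 1) j) ∧
      (∀ j : ℕ, 0 < j → j < 2 ^ (2 * k) - 1 →
        (Vd (2 * k) (2 ^ k - 1) j = 2 ↔ ∃ i ≤ k - 1, j = 2 ^ i * (2 ^ k + 1))) :=
  ⟨fun j hj0 hjN => (key k hk j hj0 hjN).1, fun j hj0 hjN => (key k hk j hj0 hjN).2⟩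
end

section
/- Let F : 𝔽_{2^{2k}} → 𝔽_{2^{2k}} be any function with F(0) = 0, and let 𝒮_F = {α ∈ 𝔽_{2^{2k}} : Tr^{2k}_1(α F(x)) is not bent}. Then |𝒮_F| ≥ 2^k. -/
/-- The Walsh–Hadamard transform of `f : 𝔽_{2^n} → 𝔽_2` at `l`. -/
noncomputable def walsh (n : ℕ) (f : GaloisField 2 n → ZMod 2) (l : GaloisField 2 n) : ℤ :=
  ∑ x : GaloisField 2 n,
    (-1 : ℤ) ^ ((f x + Algebra.trace (ZMod 2) (GaloisField 2 n) (l * x)).val)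

/-- `f` is bent on `𝔽_{2^{2k}}`: the Walsh transform takes only the values `±2^k`. -/
def IsBent (k : ℕ) (f : GaloisField 2 (2 * k) → ZMod 2) : Prop :=
  ∀ l : GaloisField 2 (2 * k), walsh (2 * k) f l = 2 ^ k ∨ walsh (2 * k) f l = -(2 ^ k)

namespace Stmt9Aux

/-- Abbreviation for the absolute trace. -/
noncomputable def tr (n : ℕ) (y : GaloisField 2 n) : ZMod 2 :=
  Algebra.trace (ZMod 2) (GaloisField 2 n) y

lemma tr_zero (n : ℕ) : tr n 0 = 0 := by
  simp [tr]

lemma tr_add (n : ℕ) (y z : GaloisField 2 n) : tr n (y + z) = tr n y + tr n z := by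
  simp [tr]

/-- A character sum over a subgroup vanishes if the character is nontrivial there. -/
lemma char_sum_eq_zero {n : ℕ} (A : Submodule (ZMod 2) (GaloisField 2 n))
    (AF : Finset (GaloisField 2 n)) (hAF : ∀ a, a ∈ AF ↔ a ∈ A)
    (y : GaloisField 2 n) (a₀ : GaloisField 2 n) (ha₀ : a₀ ∈ A) (hy : tr n (a₀ * y) ≠ 0) :
    ∑ a ∈ AF, (-1 : ℤ) ^ (tr n (a * y)).val = 0 := by
  have h1 : tr n (a₀ * y) = 1 := by
    rcases (by decide : ∀ c : ZMod 2, c = 0 ∨ c = 1) (tr n (a₀ * y)) with h | h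
    · exact absurd h hy
    · exact h
  refine Finset.sum_involution (fun a _ => a + a₀) ?_ ?_ ?_ ?_
  · intro a _
    have key : tr n ((a + a₀) * y) = tr n (a * y) + 1 := by
      rw [add_mul, tr_add, h1]
    show (-1 : ℤ) ^ (tr n (a * y)).val + (-1 : ℤ) ^ (tr n ((a + a₀) * y)).val = 0
    rw [key]
    have h2 : ∀ c : ZMod 2, (-1 : ℤ) ^ (c + 1).val = -((-1 : ℤ) ^ c.val) := by decide
    rw [h2]; ring
  · intro a _ _ hEq
    have hEq' : a + a₀ = a := hEq
    have ha0 : a₀ = 0 := by rwa [add_eq_left] at hEq'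
    rw [ha0, zero_mul, tr_zero] at h1
    exact one_ne_zero h1.symm
  · intro a ha
    exact (hAF _).mpr (A.add_mem ((hAF _).mp ha) ha₀)
  · intro a _
    show a + a₀ + a₀ = a
    rw [add_assoc, CharTwo.add_self_eq_zero, add_zero]

end Stmt9Aux

set_option maxHeartbeats 2000000 in
set_option synthInstance.maxHeartbeats 400000 in
open Stmt9Aux in
theorem stmt_9 (k : ℕ) (F : GaloisField 2 (2 * k) → GaloisField 2 (2 * k)) (hF : F 0 = 0) :
    2 ^ k ≤ {α : GaloisField 2 (2 * k) |
      ¬ IsBent k fun x => Algebra.trace (ZMod 2) (GaloisField 2 (2 * k)) (α * F x)}.ncard := by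
  classical
  set S : Set (GaloisField 2 (2 * k)) := {α : GaloisField 2 (2 * k) |
      ¬ IsBent k fun x => Algebra.trace (ZMod 2) (GaloisField 2 (2 * k)) (α * F x)} with hSdef
  -- the zero function is not bent
  have h0S : (0 : GaloisField 2 (2 * k)) ∈ S := by
    intro hB
    have h := hB 0
    have hw : walsh (2 * k)
        (fun x => Algebra.trace (ZMod 2) (GaloisField 2 (2 * k)) ((0 : GaloisField 2 (2 * k)) * F x)) 0
        = (Fintype.card (GaloisField 2 (2 * k)) : ℤ) := by
      unfold walsh
      simp only [zero_mul, map_zero, add_zero, ZMod.val_zero, pow_zero, Finset.sum_const,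
        Finset.card_univ, nsmul_eq_mul, mul_one]
    rw [hw] at h
    rcases Nat.eq_zero_or_pos k with hk0 | hk1
    · subst hk0
      have h2 : (2 : ℤ) ≤ (Fintype.card (GaloisField 2 (2 * 0)) : ℤ) := by
        exact_mod_cast Fintype.one_lt_card
      rcases h with h | h <;> rw [h] at h2 <;> norm_num at h2
    · have hcard : (Fintype.card (GaloisField 2 (2 * k)) : ℤ) = 2 ^ (2 * k) := by
        rw [Fintype.card_eq_nat_card]
        exact_mod_cast GaloisField.card 2 (2 * k) (by omega)
      rw [hcard] at h
      have hlt : (2 : ℤ) ^ k < 2 ^ (2 * k) := pow_lt_pow_right₀ (by norm_num) (by omega)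
      have hpos : (0 : ℤ) < 2 ^ k := by positivity
      rcases h with h | h <;> omega
  by_contra hcon
  push_neg at hcon
  -- k = 0 is immediate
  rcases Nat.eq_zero_or_pos k with hk0 | hk1
  · subst hk0
    have hpos : 0 < S.ncard := (Set.ncard_pos (Set.toFinite S)).mpr ⟨0, h0S⟩
    simp only [pow_zero] at hcon
    omega
  -- now k ≥ 1
  have hScard : S.ncard ≤ 2 ^ k - 1 := by omega
  have hcardK : Fintype.card (GaloisField 2 (2 * k)) = 2 ^ (2 * k) := by
    rw [Fintype.card_eq_nat_card]
    exact GaloisField.card 2 (2 * k) (by omega)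
  have hSfin : S.Finite := Set.toFinite S
  set SF : Finset (GaloisField 2 (2 * k)) := hSfin.toFinset with hSFdef
  have hSFcard : SF.card = S.ncard := (Set.ncard_eq_toFinset_card S hSfin).symm
  have hSFmem : ∀ a : GaloisField 2 (2 * k), a ∈ SF ↔ a ∈ S := fun a => hSfin.mem_toFinset
  have hone : (1 : ℕ) ≤ 2 ^ k := Nat.one_le_two_pow
  -- greedy construction of a (k+1)-dimensional subspace avoiding S ∖ {0}
  have greedy : ∀ i : ℕ, i ≤ k + 1 → ∃ (A : Submodule (ZMod 2) (GaloisField 2 (2 * k)))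
      (AF : Finset (GaloisField 2 (2 * k))),
      (∀ a, a ∈ AF ↔ a ∈ A) ∧ AF.card = 2 ^ i ∧ ∀ a ∈ A, a ∈ S → a = 0 := by
    intro i
    induction i with
    | zero =>
      intro _
      refine ⟨⊥, {0}, ?_, ?_, ?_⟩
      · intro a
        simp [Submodule.mem_bot]
      · simp
      · intro a ha _
        simpa using ha
    | succ i ih =>
      intro hik
      obtain ⟨A, AF, hAFmem, hAFcard, hA2⟩ := ih (by omega)
      set BF : Finset (GaloisField 2 (2 * k)) := Finset.image₂ (fun a b => a + b) AF SF with hBFdef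
      have hBFcard : BF.card < Fintype.card (GaloisField 2 (2 * k)) := by
        have hle : BF.card ≤ AF.card * SF.card := Finset.card_image₂_le _ _ _
        have h1 : AF.card ≤ 2 ^ k := by
          rw [hAFcard]
          exact Nat.pow_le_pow_right (by norm_num) (by omega)
        have h2 : SF.card ≤ 2 ^ k - 1 := by rw [hSFcard]; exact hScard
        have h3 : AF.card * SF.card ≤ 2 ^ k * (2 ^ k - 1) := Nat.mul_le_mul h1 h2
        have h5 : (0:ℕ) < 2 ^ k := Nat.two_pow_pos k
        have h4 : 2 ^ k * (2 ^ k - 1) < 2 ^ k * 2 ^ k :=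
          mul_lt_mul_of_pos_left (by omega) h5
        have h6 : (2:ℕ) ^ k * 2 ^ k = 2 ^ (2 * k) := by
          rw [two_mul, pow_add]
        rw [hcardK]
        omega
      obtain ⟨x, hxB⟩ : ∃ x : GaloisField 2 (2 * k), x ∉ BF := by
        by_contra hall
        push_neg at hall
        have hsub : (Finset.univ : Finset (GaloisField 2 (2 * k))) ⊆ BF := fun y _ => hall y
        have := Finset.card_le_card hsub
        rw [Finset.card_univ] at this
        omega
      have hxA : x ∉ A := by
        intro hx
        apply hxB
        have hxx : x + 0 = x := add_zero x
        rw [hBFdef]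
        exact hxx ▸ Finset.mem_image₂_of_mem ((hAFmem x).mpr hx) ((hSFmem 0).mpr h0S)
      refine ⟨A ⊔ Submodule.span (ZMod 2) {x}, AF ∪ AF.image (fun a => x + a), ?_, ?_, ?_⟩
      · intro a
        constructor
        · intro ha
          rcases Finset.mem_union.mp ha with h | h
          · exact Submodule.mem_sup_left ((hAFmem a).mp h)
          · obtain ⟨b, hb, rfl⟩ := Finset.mem_image.mp h
            exact Submodule.add_mem _
              (Submodule.mem_sup_right (Submodule.mem_span_singleton_self x))
              (Submodule.mem_sup_left ((hAFmem b).mp hb))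
        · intro ha
          rw [Submodule.mem_sup] at ha
          obtain ⟨b, hb, c, hc, rfl⟩ := ha
          rw [Submodule.mem_span_singleton] at hc
          obtain ⟨t, rfl⟩ := hc
          rcases (by decide : ∀ c : ZMod 2, c = 0 ∨ c = 1) t with rfl | rfl
          · rw [zero_smul, add_zero]
            exact Finset.mem_union_left _ ((hAFmem b).mpr hb)
          · rw [one_smul]
            refine Finset.mem_union_right _ (Finset.mem_image.mpr ⟨b, (hAFmem b).mpr hb, ?_⟩)
            rw [add_comm]
      · have hinj : Function.Injective (fun a : GaloisField 2 (2 * k) => x + a) :=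
          fun u v huv => by simpa using huv
        have hdisj : Disjoint AF (AF.image (fun a => x + a)) := by
          rw [Finset.disjoint_left]
          intro a haAF haIm
          obtain ⟨b, hb, rfl⟩ := Finset.mem_image.mp haIm
          apply hxA
          have hxab : x = (x + b) + b := by
            rw [add_assoc, CharTwo.add_self_eq_zero, add_zero]
          rw [hxab]
          exact A.add_mem ((hAFmem _).mp haAF) ((hAFmem b).mp hb)
        rw [Finset.card_union_of_disjoint hdisj, Finset.card_image_of_injective _ hinj,
          hAFcard]
        ring
      · intro a ha haS
        rw [Submodule.mem_sup] at ha
        obtain ⟨b, hb, c, hc, rfl⟩ := ha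
        rw [Submodule.mem_span_singleton] at hc
        obtain ⟨t, rfl⟩ := hc
        rcases (by decide : ∀ c : ZMod 2, c = 0 ∨ c = 1) t with rfl | rfl
        · rw [zero_smul, add_zero] at haS ⊢
          exact hA2 b hb haS
        · rw [one_smul] at haS ⊢
          exfalso
          apply hxB
          have hxeq : b + (b + x) = x := by
            rw [← add_assoc, CharTwo.add_self_eq_zero, zero_add]
          rw [hBFdef]
          exact hxeq ▸ Finset.mem_image₂_of_mem ((hAFmem b).mpr hb) ((hSFmem _).mpr haS)
  obtain ⟨A, AF, hAFmem, hAFcard, hA2⟩ := greedy (k + 1) le_rfl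
  have h0AF : (0 : GaloisField 2 (2 * k)) ∈ AF := (hAFmem 0).mpr A.zero_mem
  -- the exponential sum ν
  set ν : GaloisField 2 (2 * k) → ℤ :=
    fun a => ∑ x : GaloisField 2 (2 * k), (-1 : ℤ) ^ (tr (2 * k) (a * F x)).val with hνdef
  -- bent values
  have hbent : ∀ a ∈ AF, a ≠ 0 → ν a = 2 ^ k ∨ ν a = -(2 ^ k) := by
    intro a haAF hane
    have haA : a ∈ A := (hAFmem a).mp haAF
    have haS : a ∉ S := fun h => hane (hA2 a haA h)
    have hB : IsBent k fun x => Algebra.trace (ZMod 2) (GaloisField 2 (2 * k)) (a * F x) :=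
      not_not.mp haS
    have h := hB 0
    have hw : walsh (2 * k)
        (fun x => Algebra.trace (ZMod 2) (GaloisField 2 (2 * k)) (a * F x)) 0 = ν a := by
      unfold walsh
      simp only [hνdef, zero_mul, map_zero, add_zero]
      rfl
    rw [hw] at h
    exact h
  -- the counting predicate
  set P : GaloisField 2 (2 * k) → Prop :=
    fun x => ∀ a ∈ A, tr (2 * k) (a * F x) = 0 with hPdef
  -- the main identity
  have key : ∑ a ∈ AF, ν a = ((Finset.univ.filter P).card : ℤ) * 2 ^ (k + 1) := by
    simp only [hνdef]
    rw [Finset.sum_comm]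
    have step : ∀ x : GaloisField 2 (2 * k), ∑ a ∈ AF, (-1 : ℤ) ^ (tr (2 * k) (a * F x)).val
        = if P x then (2 : ℤ) ^ (k + 1) else 0 := by
      intro x
      by_cases hP : P x
      · rw [if_pos hP]
        rw [Finset.sum_congr rfl (fun a ha => by
          rw [hP a ((hAFmem a).mp ha), ZMod.val_zero, pow_zero]),
          Finset.sum_const, hAFcard, nsmul_eq_mul, mul_one]
        push_cast
        ring
      · rw [if_neg hP]
        have hP' : ∃ a₀, a₀ ∈ A ∧ tr (2 * k) (a₀ * F x) ≠ 0 := by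
          by_contra h'
          push_neg at h'
          exact hP (fun a ha => h' a ha)
        obtain ⟨a₀, ha₀A, hne⟩ := hP'
        exact char_sum_eq_zero A AF hAFmem (F x) a₀ ha₀A hne
    rw [Finset.sum_congr rfl (fun x _ => step x), ← Finset.sum_filter,
      Finset.sum_const, nsmul_eq_mul]
  -- value at 0
  have hν0 : ν 0 = 2 ^ (2 * k) := by
    simp only [hνdef]
    rw [Finset.sum_congr rfl (fun x _ => by
      rw [zero_mul, tr_zero, ZMod.val_zero, pow_zero]),
      Finset.sum_const, Finset.card_univ, hcardK, nsmul_eq_mul, mul_one]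
    push_cast
    ring
  -- split off the 0 term
  have hsplit : ν 0 + ∑ a ∈ AF.erase 0, ν a = ∑ a ∈ AF, ν a :=
    Finset.add_sum_erase AF ν h0AF
  have hErCard : (AF.erase 0).card = 2 ^ (k + 1) - 1 := by
    rw [Finset.card_erase_of_mem h0AF, hAFcard]
  -- the contradiction, modulo 2^(k+1)
  have hE : ((Finset.univ.filter P).card : ℤ) * 2 ^ (k + 1)
      = 2 ^ (2 * k) + ∑ a ∈ AF.erase 0, ν a := by
    rw [← key, ← hsplit, hν0]
  have hcastE := congrArg (fun z : ℤ => (z : ZMod (2 ^ (k + 1)))) hE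
  push_cast at hcastE
  have h2pow : ((2 : ZMod (2 ^ (k + 1)))) ^ (k + 1) = 0 := by
    have h := ZMod.natCast_self (2 ^ (k + 1))
    push_cast at h
    exact h
  have h2powk : ((2 : ZMod (2 ^ (k + 1)))) ^ (2 * k) = 0 := by
    have hsplitpow : ((2 : ZMod (2 ^ (k + 1)))) ^ (2 * k)
        = ((2 : ZMod (2 ^ (k + 1)))) ^ (k + 1) * ((2 : ZMod (2 ^ (k + 1)))) ^ (k - 1) := by
      rw [← pow_add]
      congr 1
      omega
    rw [hsplitpow, h2pow, zero_mul]
  have hneg : (-(2 ^ k) : ZMod (2 ^ (k + 1))) = 2 ^ k := by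
    have hh : (2 : ZMod (2 ^ (k + 1))) ^ k + 2 ^ k = 0 := by
      have h9 : (2 : ZMod (2 ^ (k + 1))) ^ k + 2 ^ k = 2 ^ (k + 1) := by ring
      rw [h9, h2pow]
    linear_combination -hh
  have hterm : ∀ a ∈ AF.erase 0,
      ((ν a : ℤ) : ZMod (2 ^ (k + 1))) = (2 : ZMod (2 ^ (k + 1))) ^ k := by
    intro a ha
    have hane : a ≠ 0 := Finset.ne_of_mem_erase ha
    have haAF : a ∈ AF := Finset.mem_of_mem_erase ha
    rcases hbent a haAF hane with h | h
    · rw [h]; push_cast; rfl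
    · rw [h]; push_cast; rw [hneg]
  have hsum2 : (∑ a ∈ AF.erase 0, ((ν a : ℤ) : ZMod (2 ^ (k + 1))))
      = ((2 ^ (k + 1) - 1 : ℕ) : ZMod (2 ^ (k + 1))) * 2 ^ k := by
    rw [Finset.sum_congr rfl hterm, Finset.sum_const, hErCard, nsmul_eq_mul]
  have hcast1 : ((2 ^ (k + 1) - 1 : ℕ) : ZMod (2 ^ (k + 1))) = -1 := by
    have h1 : (1:ℕ) ≤ 2 ^ (k + 1) := Nat.one_le_two_pow
    push_cast [Nat.cast_sub h1]
    rw [h2pow]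
    ring
  have hfinal : (2 : ZMod (2 ^ (k + 1))) ^ k = 0 := by
    rw [h2pow, mul_zero, h2powk, hsum2, hcast1] at hcastE
    linear_combination hcastE
  have hnat : ((2 ^ k : ℕ) : ZMod (2 ^ (k + 1))) = 0 := by push_cast; exact hfinal
  have hdvd : 2 ^ (k + 1) ∣ 2 ^ k :=
    (CharP.cast_eq_zero_iff (ZMod (2 ^ (k + 1))) (2 ^ (k + 1)) (2 ^ k)).mp hnat
  have hle : 2 ^ (k + 1) ≤ 2 ^ k := Nat.le_of_dvd (Nat.two_pow_pos k) hdvd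
  have hlt : (2:ℕ) ^ k < 2 ^ (k + 1) := Nat.pow_lt_pow_right (by norm_num) (by omega)
  omega
end

section
/- Let F(x) = x^d on 𝔽_{2^{2k}} with 0 < d < 2^{2k} − 1, and let 𝒮_F = {α : Tr^{2k}_1(α x^d) is not bent}. If |𝒮_F| = 2^k, then 𝒮_F = 𝔽_{2^k}, the subfield of size 2^k inside 𝔽_{2^{2k}}. -/
/-!
Write `q = 2 ^ k`, `Tr` for the absolute trace, `W_α` for the Walsh transform of
`x ↦ Tr (α x ^ d)` and `S` for the set of `α` making it non-bent. Substituting `x ↦ c x` and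
applying the Frobenius show that `S` is stable under multiplication by nonzero `d`-th powers and
under squaring; `0 ∈ S` since `W_0 (0) = q ^ 2`.

For `l ≠ 0`, orthogonality of additive characters gives
`∑_α W_α(l) ^ 2 = q ^ 2 (q ^ 2 + 1 - |U|)`, where `U` is the group of `d`-th roots of unity.
The `q ^ 2 - q` bent `α` contribute `q ^ 2` each, so `|U| ≤ q + 1`, and the group `D` of nonzero
`d`-th powers, of order `(q ^ 2 - 1) / |U|`, has at least `q - 1` elements. For `a ∈ S \ {0}`
the coset `a D` lies in `S \ {0}`, which has `q - 1` elements, so `S \ {0} = a D`; then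
`a ^ 2 ∈ a D` forces `a ∈ D`, so `S \ {0} = D` has order `q - 1`. Hence `S` lies in
`{β | β ^ q = β}`, which has at most `q` elements.
-/

open Finset Polynomial AddChar
open scoped Pointwise

section TraceCharacter

variable (K : Type*) [Field K] [Algebra (ZMod 2) K]

noncomputable def traceChar : AddChar K ℤ :=
  (zmodChar 2 (by norm_num : (-1 : ℤ) ^ 2 = 1)).compAddMonoidHom
    (Algebra.trace (ZMod 2) K).toAddMonoidHom

variable {K}

lemma traceChar_apply (x : K) : traceChar K x = (-1) ^ (Algebra.trace (ZMod 2) K x).val := rfl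

variable [Finite K]

lemma isPrimitive_traceChar : (traceChar K).IsPrimitive := by
  refine IsPrimitive.of_ne_one (ne_one_iff.2 ?_)
  obtain ⟨x, hx⟩ := Algebra.trace_surjective (ZMod 2) K 1
  exact ⟨x, by simp [traceChar_apply, hx, ZMod.val_one]⟩

lemma sum_traceChar_mul [Fintype K] [DecidableEq K] (b : K) :
    ∑ x : K, traceChar K (x * b) = if b = 0 then (Fintype.card K : ℤ) else 0 := by
  rw [sum_mulShift b isPrimitive_traceChar]
  push_cast
  rfl

lemma traceChar_sq (x : K) : traceChar K (x ^ 2) = traceChar K x := by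
  have : CharP K 2 := charP_of_injective_algebraMap (algebraMap (ZMod 2) K).injective 2
  rw [traceChar_apply, traceChar_apply]
  congr 2
  simpa using Algebra.trace_eq_of_algEquiv (FiniteField.frobeniusAlgEquiv (ZMod 2) K 2) x

end TraceCharacter

section PowerMap

variable {K : Type*} [Field K] {d : ℕ}

lemma filter_pow_eq_pow_eq_image_mul [Fintype K] [DecidableEq K] (hd : 0 < d) {x : K}
    (hx : x ≠ 0) :
    univ.filter (fun y => y ^ d = x ^ d) = (nthRootsFinset d (1 : K)).image (x * ·) := by
  ext y
  simp only [mem_filter, mem_univ, true_and, mem_image, mem_nthRootsFinset hd]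
  constructor
  · intro hy
    refine ⟨x⁻¹ * y, ?_, by field_simp⟩
    rw [mul_pow, hy, inv_pow, inv_mul_cancel₀ (pow_ne_zero d hx)]
  · rintro ⟨u, hu, rfl⟩
    rw [mul_pow, hu, mul_one]

lemma card_rootsOfUnity_eq_card_nthRootsFinset [NeZero d] :
    Nat.card (rootsOfUnity d K) = #(nthRootsFinset d (1 : K)) := by
  classical
  rw [← Nat.card_eq_finsetCard, Nat.card_congr (rootsOfUnityEquivNthRoots K d)]
  exact Nat.card_congr (Equiv.subtypeEquivRight fun x => by
    rw [nthRootsFinset_def, Multiset.mem_toFinset])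

lemma card_range_powMonoidHom_mul_card_nthRootsFinset [Fintype K] [NeZero d] :
    Nat.card (powMonoidHom d : Kˣ →* Kˣ).range * #(nthRootsFinset d (1 : K))
      = Fintype.card K - 1 := by
  rw [← card_rootsOfUnity_eq_card_nthRootsFinset, rootsOfUnity_eq_ker, ← Subgroup.index_ker,
    mul_comm, Subgroup.card_mul_index, Nat.card_units, Nat.card_eq_fintype_card]

lemma sub_one_le_card_range_powMonoidHom [Fintype K] [NeZero d] {q : ℕ}
    (hK : Fintype.card K = q * q) (hU : #(nthRootsFinset d (1 : K)) ≤ q + 1) :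
    q - 1 ≤ Nat.card (powMonoidHom d : Kˣ →* Kˣ).range := by
  refine Nat.le_of_mul_le_mul_right (c := q + 1) ?_ q.succ_pos
  calc (q - 1) * (q + 1) = Fintype.card K - 1 := by rw [hK, mul_comm, mul_self_tsub_one]
    _ = _ := card_range_powMonoidHom_mul_card_nthRootsFinset.symm
    _ ≤ _ := Nat.mul_le_mul_left _ hU

lemma ncard_setOf_pow_eq_self_le {q : ℕ} (hq : 1 < q) : {x : K | x ^ q = x}.ncard ≤ q := by
  classical
  have hp : (X ^ q - X : K[X]) ≠ 0 := FiniteField.X_pow_card_sub_X_ne_zero K hq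
  calc {x : K | x ^ q = x}.ncard ≤ ((X ^ q - X : K[X]).roots.toFinset : Set K).ncard := by
        refine Set.ncard_le_ncard (fun x hx => ?_) (Finset.finite_toSet _)
        simp_all [mem_roots hp, sub_eq_zero]
    _ ≤ Multiset.card (X ^ q - X : K[X]).roots := by
        rw [Set.ncard_coe_finset]
        exact Multiset.toFinset_card_le _
    _ ≤ q := (card_roots' _).trans (FiniteField.X_pow_card_sub_X_natDegree_eq K hq).le

lemma eq_setOf_pow_eq_self_of_pow_sub_one_eq_one [Finite K] {S : Set K} {q : ℕ} (hq : 1 < q)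
    (hS : S.ncard = q) (hpow : ∀ β ∈ S, β ≠ 0 → β ^ (q - 1) = 1) :
    S = {β | β ^ q = β} := by
  refine Set.eq_of_subset_of_ncard_le (fun β hβ => ?_)
    (hS.symm ▸ ncard_setOf_pow_eq_self_le hq) (Set.toFinite _)
  obtain rfl | hβ0 := eq_or_ne β 0
  · exact zero_pow (by omega)
  show β ^ q = β
  rw [← Nat.sub_add_cancel hq.le, pow_succ, hpow β hβ hβ0, one_mul]

end PowerMap

theorem Subgroup.eq_coe_of_mul_mem_of_ncard_le {G : Type*} [Group G] [Finite G]
    (H : Subgroup G) {A : Set G} {a : G} (ha : a ∈ A) (ha2 : a ^ 2 ∈ A)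
    (hmul : ∀ x ∈ A, ∀ h ∈ H, x * h ∈ A) (hcard : A.ncard ≤ Nat.card H) : A = H := by
  have hcoset : a • (H : Set G) = A := by
    refine Set.eq_of_subset_of_ncard_le ?_ ?_ (Set.toFinite A)
    · rintro _ ⟨h, hh, rfl⟩
      exact hmul a ha h hh
    · rwa [Set.ncard_smul_set, ← Nat.card_coe_set_eq]
  obtain ⟨h, hh, hah⟩ : a ^ 2 ∈ a • (H : Set G) := hcoset ▸ ha2
  have haH : a ∈ H := by
    have : a * h = a * a := by simpa [pow_two] using hah
    exact mul_left_cancel this ▸ hh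
  rw [← hcoset, leftCoset_mem_leftCoset H haH]

theorem pow_sub_one_eq_one_of_mul_pow_mem {K : Type*} [Field K] [Finite K] {S : Set K}
    {q d : ℕ} (h0 : 0 ∈ S) (hS : S.ncard = q) (hmul : ∀ α ∈ S, ∀ c : K, c ≠ 0 → α * c ^ d ∈ S)
    (hsq : ∀ α ∈ S, α ^ 2 ∈ S) (hD : q - 1 ≤ Nat.card (powMonoidHom d : Kˣ →* Kˣ).range)
    {β : K} (hβ : β ∈ S) (hβ0 : β ≠ 0) : β ^ (q - 1) = 1 := by
  set D := (powMonoidHom d : Kˣ →* Kˣ).range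
  set A : Set Kˣ := Units.val ⁻¹' (S \ {0})
  have hA : A.ncard = q - 1 := by
    rw [Set.ncard_preimage_of_injective_subset_range Units.val_injective
      fun x hx => ⟨Units.mk0 x hx.2, rfl⟩, Set.ncard_sdiff_singleton_of_mem h0, hS]
  obtain ⟨a, ha⟩ : A.Nonempty := ⟨Units.mk0 β hβ0, hβ, hβ0⟩
  have hAD : A = D := by
    refine Subgroup.eq_coe_of_mul_mem_of_ncard_le D ha ?_ ?_ (hA ▸ hD)
    · exact ⟨by simpa using hsq _ ha.1, by simp⟩
    · rintro x ⟨hxS, -⟩ _ ⟨c, rfl⟩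
      exact ⟨by simpa using hmul _ hxS c c.ne_zero, by simp⟩
  have hcardD : Nat.card D = q - 1 := by
    rw [← hA, hAD]
    exact Nat.card_coe_set_eq _
  have hβD : Units.mk0 β hβ0 ∈ (D : Set Kˣ) := hAD ▸ ⟨hβ, hβ0⟩
  simpa [hcardD] using congrArg (fun u : D => ((u : Kˣ) : K)) (pow_card_eq_one' (x := ⟨_, hβD⟩))

noncomputable def traceMonomial (n d : ℕ) (α : GaloisField 2 n) : GaloisField 2 n → ZMod 2 :=
  fun x => Algebra.trace (ZMod 2) (GaloisField 2 n) (α * x ^ d)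

section Walsh

variable {n d : ℕ}

lemma card_galoisField (hn : n ≠ 0) : Fintype.card (GaloisField 2 n) = 2 ^ n := by
  rw [← Nat.card_eq_fintype_card, GaloisField.card 2 n hn]

lemma walsh_traceMonomial (α l : GaloisField 2 n) :
    walsh n (traceMonomial n d α) l = ∑ x, traceChar _ (α * x ^ d + l * x) := by
  simp only [walsh, traceMonomial, traceChar_apply, map_add]

lemma walsh_traceMonomial_mul_pow (α l : GaloisField 2 n) {c : GaloisField 2 n} (hc : c ≠ 0) :
    walsh n (traceMonomial n d (α * c ^ d)) l = walsh n (traceMonomial n d α) (c⁻¹ * l) := by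
  rw [walsh_traceMonomial, walsh_traceMonomial]
  refine Fintype.sum_equiv (Equiv.mulLeft₀ c hc) _ _ fun x => ?_
  show _ = traceChar _ (α * (c * x) ^ d + c⁻¹ * l * (c * x))
  congr 1
  field_simp
  ring

lemma walsh_traceMonomial_sq (α m : GaloisField 2 n) :
    walsh n (traceMonomial n d (α ^ 2)) (m ^ 2) = walsh n (traceMonomial n d α) m := by
  rw [walsh_traceMonomial, walsh_traceMonomial]
  refine (Fintype.sum_equiv (FiniteField.frobeniusAlgEquiv (ZMod 2) _ 2).toEquiv _ _
    fun y => ?_).symm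
  simp only [AlgEquiv.toEquiv_eq_coe, EquivLike.coe_coe, FiniteField.frobeniusAlgEquiv_apply,
    ZMod.card]
  rw [← traceChar_sq, CharTwo.add_sq]
  ring_nf

variable [DecidableEq (GaloisField 2 n)]

lemma sum_walsh_traceMonomial_sq (hn : n ≠ 0) (l : GaloisField 2 n) :
    ∑ α, walsh n (traceMonomial n d α) l ^ 2 =
      2 ^ n * ∑ x, ∑ y ∈ univ.filter (fun y => y ^ d = x ^ d), traceChar _ (l * (x + y)) := by
  calc ∑ α, walsh n (traceMonomial n d α) l ^ 2
      = ∑ x, ∑ y, traceChar _ (l * (x + y)) * ∑ α, traceChar _ (α * (x ^ d + y ^ d)) := by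
        simp_rw [walsh_traceMonomial, sq, sum_mul_sum, mul_sum]
        rw [sum_comm]
        refine sum_congr rfl fun x _ => ?_
        rw [sum_comm]
        refine sum_congr rfl fun y _ => sum_congr rfl fun α _ => ?_
        rw [← map_add_eq_mul, ← map_add_eq_mul]
        ring_nf
    _ = 2 ^ n * ∑ x, ∑ y ∈ univ.filter (fun y => y ^ d = x ^ d), traceChar _ (l * (x + y)) := by
        simp only [sum_traceChar_mul, card_galoisField hn, CharTwo.add_eq_zero, mul_ite, mul_zero,
          ← sum_filter, mul_sum]
        push_cast
        simp only [eq_comm, mul_comm]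

lemma sum_sum_filter_pow_eq_pow_traceChar (hn : n ≠ 0) (hd : 0 < d) {l : GaloisField 2 n}
    (hl : l ≠ 0) :
    ∑ x, ∑ y ∈ univ.filter (fun y => y ^ d = x ^ d), traceChar _ (l * (x + y)) =
      2 ^ n + 1 - (#(nthRootsFinset d (1 : GaloisField 2 n)) : ℤ) := by
  set U := nthRootsFinset d (1 : GaloisField 2 n)
  have hfiber : ∀ x ≠ 0, ∑ y ∈ univ.filter (fun y => y ^ d = x ^ d), traceChar _ (l * (x + y)) =
      ∑ u ∈ U, traceChar _ (x * (l * (1 + u))) := by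
    intro x hx
    rw [filter_pow_eq_pow_eq_image_mul hd hx, sum_image fun _ _ _ _ h => mul_left_cancel₀ hx h]
    exact sum_congr rfl fun u _ => by ring_nf
  have hzero : univ.filter (fun y : GaloisField 2 n => y ^ d = 0 ^ d) = {0} := by
    ext
    simp [zero_pow hd.ne', pow_eq_zero_iff hd.ne']
  have hall : ∑ x, ∑ u ∈ U, traceChar _ (x * (l * (1 + u))) = 2 ^ n := by
    have hone : (1 : GaloisField 2 n) ∈ U := by simp [U, mem_nthRootsFinset hd]
    rw [sum_comm]
    simp only [sum_traceChar_mul, card_galoisField hn, mul_eq_zero, hl, false_or,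
      CharTwo.add_eq_zero, eq_comm (a := (1 : GaloisField 2 n))]
    rw [sum_ite_eq' U 1, if_pos hone]
    push_cast
    rfl
  rw [← add_sum_erase _ _ (mem_univ 0), hzero, sum_singleton,
    sum_congr rfl fun x hx => hfiber x (ne_of_mem_erase hx), sum_erase_eq_sub (mem_univ 0), hall]
  simp only [add_zero, mul_zero, map_zero_eq_one, zero_mul, sum_const, Int.nsmul_eq_mul, mul_one]
  ring

lemma sum_walsh_traceMonomial_sq_eq (hn : n ≠ 0) (hd : 0 < d) {l : GaloisField 2 n}
    (hl : l ≠ 0) :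
    ∑ α, walsh n (traceMonomial n d α) l ^ 2 =
      2 ^ n * (2 ^ n + 1 - #(nthRootsFinset d (1 : GaloisField 2 n))) := by
  rw [sum_walsh_traceMonomial_sq hn, sum_sum_filter_pow_eq_pow_traceChar hn hd hl]

end Walsh

section Bent

variable {k d : ℕ}

lemma isBent_traceMonomial_mul_pow_iff {α c : GaloisField 2 (2 * k)} (hc : c ≠ 0) :
    IsBent k (traceMonomial (2 * k) d (α * c ^ d)) ↔ IsBent k (traceMonomial (2 * k) d α) := by
  simp only [IsBent, walsh_traceMonomial_mul_pow _ _ hc]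
  exact ⟨fun h l => by simpa [inv_mul_cancel_left₀ hc] using h (c * l), fun h l => h _⟩

lemma isBent_traceMonomial_sq_iff {α : GaloisField 2 (2 * k)} :
    IsBent k (traceMonomial (2 * k) d (α ^ 2)) ↔ IsBent k (traceMonomial (2 * k) d α) := by
  rw [IsBent, ← (FiniteField.frobeniusAlgEquiv (ZMod 2) _ 2).toEquiv.forall_congr_right]
  simp [walsh_traceMonomial_sq, IsBent]

lemma not_isBent_traceMonomial_zero (hk : k ≠ 0) : ¬ IsBent k (traceMonomial (2 * k) d 0) := by
  have hW : walsh (2 * k) (traceMonomial (2 * k) d 0) 0 = 2 ^ (2 * k) := by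
    simp [walsh_traceMonomial, card_galoisField (by omega : 2 * k ≠ 0)]
  intro h
  rcases h 0 with h | h <;> rw [hW] at h
  · have := Int.pow_right_injective (le_refl 2) h
    omega
  · have : (0 : ℤ) < 2 ^ (2 * k) + 2 ^ k := by positivity
    omega

lemma card_nthRootsFinset_le_of_ncard_not_isBent (hk : k ≠ 0) (hd : 0 < d)
    (hS : {α | ¬ IsBent k (traceMonomial (2 * k) d α)}.ncard = 2 ^ k) :
    #(nthRootsFinset d (1 : GaloisField 2 (2 * k))) ≤ 2 ^ k + 1 := by
  classical
  obtain ⟨l, hl⟩ := exists_ne (0 : GaloisField 2 (2 * k))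
  have hbent : (#(univ.filter fun α => IsBent k (traceMonomial (2 * k) d α)) : ℤ) =
      2 ^ (2 * k) - 2 ^ k := by
    have := card_filter_add_card_filter_not (s := univ)
      (fun α => IsBent k (traceMonomial (2 * k) d α))
    rw [Set.ncard_eq_toFinset_card', Set.toFinset_ofPred] at hS
    rw [card_univ, card_galoisField (by omega), hS] at this
    zify at this
    linarith
  have hlow : (2 : ℤ) ^ (2 * k) * (2 ^ (2 * k) - 2 ^ k) ≤
      ∑ α, walsh (2 * k) (traceMonomial (2 * k) d α) l ^ 2 := by
    rw [← hbent, mul_comm, ← nsmul_eq_mul, ← sum_const, sum_filter]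
    refine sum_le_sum fun α _ => ?_
    split_ifs with h
    · exact le_of_eq (by rcases h l with h | h <;> rw [h] <;> ring)
    · exact sq_nonneg _
  rw [sum_walsh_traceMonomial_sq_eq (by omega) hd hl] at hlow
  have := le_of_mul_le_mul_left hlow (by positivity)
  zify
  linarith

end Bent

theorem stmt_10 (k d : ℕ) (hd1 : 0 < d) (hd2 : d < 2 ^ (2 * k) - 1)
    (hS : {α : GaloisField 2 (2 * k) |
        ¬ IsBent k fun x => Algebra.trace (ZMod 2) (GaloisField 2 (2 * k)) (α * x ^ d)}.ncard
      = 2 ^ k) :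
    {α : GaloisField 2 (2 * k) |
        ¬ IsBent k fun x => Algebra.trace (ZMod 2) (GaloisField 2 (2 * k)) (α * x ^ d)}
      = {α : GaloisField 2 (2 * k) | α ^ (2 ^ k) = α} := by
  have hk : k ≠ 0 := by
    rintro rfl
    omega
  have : NeZero d := ⟨hd1.ne'⟩
  have hK : Fintype.card (GaloisField 2 (2 * k)) = 2 ^ k * 2 ^ k := by
    rw [card_galoisField (by omega), two_mul, pow_add]
  change {α | ¬ IsBent k (traceMonomial (2 * k) d α)}.ncard = _ at hS
  have hD := sub_one_le_card_range_powMonoidHom hK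
    (card_nthRootsFinset_le_of_ncard_not_isBent hk hd1 hS)
  refine eq_setOf_pow_eq_self_of_pow_sub_one_eq_one (Nat.one_lt_two_pow hk) hS
    fun β hβ hβ0 => pow_sub_one_eq_one_of_mul_pow_mem (not_isBent_traceMonomial_zero hk) hS
      (fun α hα c hc => mt (isBent_traceMonomial_mul_pow_iff hc).mp hα)
      (fun α hα => mt isBent_traceMonomial_sq_iff.mp hα) hD hβ hβ0
end

section
/- Let F(x) = x^d on 𝔽_{2^{2k}} with 0 < d < 2^{2k} − 1. If the set 𝒮_F of α for which Tr^{2k}_1(α x^d) is not bent satisfies |𝒮_F| = 2^k, then 2^k + 1 divides d. -/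
theorem Subgroup.card_dvd_ncard_of_mul_mem {G : Type*} [Group G] [Finite G] (H : Subgroup G)
    {T : Set G} (hT : ∀ t ∈ T, ∀ h ∈ H, t * h ∈ T) : Nat.card H ∣ T.ncard := by
  have hsat : (QuotientGroup.mk : G → G ⧸ H) ⁻¹' (QuotientGroup.mk '' T) = T := by
    refine Set.Subset.antisymm ?_ (Set.subset_preimage_image _ _)
    rintro x ⟨t, ht, htx⟩
    simpa using hT t ht _ (QuotientGroup.eq.mp htx)
  rw [← hsat, ← Nat.card_coe_set_eq,
    Nat.card_congr (QuotientGroup.preimageMkEquivSubgroupProdSet H _), Nat.card_prod]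
  exact dvd_mul_right _ _

theorem Set.ncard_preimage_units_val {M₀ : Type*} [GroupWithZero M₀] [Finite M₀] {S : Set M₀}
    (h0 : 0 ∈ S) : (Units.val ⁻¹' S : Set M₀ˣ).ncard = S.ncard - 1 := by
  have himage : Units.val '' (Units.val ⁻¹' S : Set M₀ˣ) = S \ {0} := by
    ext x
    exact ⟨fun ⟨u, hu, hux⟩ => hux ▸ ⟨hu, u.ne_zero⟩,
      fun ⟨hx, hx0⟩ => ⟨Units.mk0 x hx0, hx, rfl⟩⟩
  rw [← Set.ncard_image_of_injective _ Units.val_injective, himage,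
    Set.ncard_sdiff_singleton_of_mem h0]

theorem Nat.add_one_dvd_of_div_gcd_dvd {a d : ℕ} (ha : 1 < a)
    (h : (a ^ 2 - 1) / (a ^ 2 - 1).gcd d ∣ a - 1) : a + 1 ∣ d := by
  set g := (a ^ 2 - 1).gcd d
  have hfactor : a ^ 2 - 1 = (a + 1) * (a - 1) := by
    rw [← Nat.sq_sub_sq, one_pow]
  have hmul : (a + 1) * (a - 1) ∣ g * (a - 1) := by
    rw [← hfactor, ← Nat.mul_div_cancel' (Nat.gcd_dvd_left (a ^ 2 - 1) d)]
    exact mul_dvd_mul_left g h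
  exact (Nat.dvd_of_mul_dvd_mul_right (by omega) hmul).trans (Nat.gcd_dvd_right _ _)

theorem walsh_comp_mul (n : ℕ) (f : GaloisField 2 n → ZMod 2) (c : (GaloisField 2 n)ˣ)
    (l : GaloisField 2 n) :
    walsh n (fun x => f (c * x)) l = walsh n f (l * ↑c⁻¹) := by
  refine Fintype.sum_bijective (fun x => (c : GaloisField 2 n) * x)
    (Equiv.mulLeft₀ (c : GaloisField 2 n) c.ne_zero).bijective _ _ fun x => ?_
  rw [mul_assoc, Units.inv_mul_cancel_left]

theorem IsBent.of_comp_mul {k : ℕ} {f : GaloisField 2 (2 * k) → ZMod 2}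
    (c : (GaloisField 2 (2 * k))ˣ) (h : IsBent k fun x => f (c * x)) : IsBent k f := by
  intro l
  simpa [walsh_comp_mul] using h (l * c)

def nonBentSet (k d : ℕ) : Set (GaloisField 2 (2 * k)) :=
  {α | ¬ IsBent k fun x => Algebra.trace (ZMod 2) (GaloisField 2 (2 * k)) (α * x ^ d)}

theorem mul_pow_mem_nonBentSet {k d : ℕ} {α : GaloisField 2 (2 * k)} (hα : α ∈ nonBentSet k d)
    (c : (GaloisField 2 (2 * k))ˣ) : α * (c : GaloisField 2 (2 * k)) ^ d ∈ nonBentSet k d := by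
  intro hbent
  refine hα (IsBent.of_comp_mul c ?_)
  simpa only [mul_pow, mul_assoc] using hbent

theorem zero_mem_nonBentSet {k : ℕ} (hk : k ≠ 0) (d : ℕ) :
    (0 : GaloisField 2 (2 * k)) ∈ nonBentSet k d := by
  intro hbent
  have hwalsh : walsh (2 * k) (fun x => Algebra.trace (ZMod 2) (GaloisField 2 (2 * k))
      ((0 : GaloisField 2 (2 * k)) * x ^ d)) 0 = 2 ^ (2 * k) := by
    simp only [walsh, zero_mul, map_zero, add_zero, ZMod.val_zero, pow_zero, Finset.sum_const,
      Finset.card_univ, ← Nat.card_eq_fintype_card, GaloisField.card 2 (2 * k) (by omega)]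
    norm_num
  have hlt : (2 : ℤ) ^ k < 2 ^ (2 * k) := pow_lt_pow_right₀ one_lt_two (by omega)
  have hpos : (0 : ℤ) < 2 ^ k := by positivity
  rcases hbent 0 with h | h <;> omega

theorem stmt_11_general (k d : ℕ) (hd2 : d < 2 ^ (2 * k) - 1)
    (hS : {α : GaloisField 2 (2 * k) |
        ¬ IsBent k fun x => Algebra.trace (ZMod 2) (GaloisField 2 (2 * k)) (α * x ^ d)}.ncard
      = 2 ^ k) :
    (2 ^ k + 1) ∣ d := by
  have hk : k ≠ 0 := by
    rintro rfl
    simp at hd2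
  have hcard : Nat.card (GaloisField 2 (2 * k)) = (2 ^ k) ^ 2 := by
    rw [GaloisField.card 2 _ (by omega), ← pow_mul, mul_comm]
  have hunits : (Units.val ⁻¹' nonBentSet k d : Set (GaloisField 2 (2 * k))ˣ).ncard
      = 2 ^ k - 1 := by
    rw [Set.ncard_preimage_units_val (zero_mem_nonBentSet hk d), nonBentSet, hS]
  have hdvd := (powMonoidHom d : (GaloisField 2 (2 * k))ˣ →* _).range.card_dvd_ncard_of_mul_mem
    (T := Units.val ⁻¹' nonBentSet k d) (by
      rintro t ht _ ⟨c, rfl⟩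
      simpa using mul_pow_mem_nonBentSet ht c)
  rw [IsCyclic.card_powMonoidHom_range, Nat.card_units, hcard, hunits] at hdvd
  exact Nat.add_one_dvd_of_div_gcd_dvd (Nat.one_lt_two_pow hk) hdvd

theorem stmt_11 (k d : ℕ) (hd1 : 0 < d) (hd2 : d < 2 ^ (2 * k) - 1)
    (hS : {α : GaloisField 2 (2 * k) |
        ¬ IsBent k fun x => Algebra.trace (ZMod 2) (GaloisField 2 (2 * k)) (α * x ^ d)}.ncard
      = 2 ^ k) :
    (2 ^ k + 1) ∣ d :=
  stmt_11_general k d hd2 hS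
end

section
/- Let n = 2k, d = (2^k + 1)s with 0 < s < 2^k − 1, gcd(s, 2^k − 1) = 1, and s ∉ {1, 2, 4, …, 2^{k−1}}. Let t ≡ s^{−1} (mod 2^k − 1) with 0 < t < 2^k − 1 and set t̃ = 2^k − 1 − t. Then wt(t̃) + wt(−t̃ d mod (2^n − 1)) = wt(t̃) + 2 ≤ k, where wt denotes binary Hamming weight of the representative in [0, 2^n − 1). -/
private lemma dsum_step (a : ℕ) :
    (Nat.digits 2 a).sum = a % 2 + (Nat.digits 2 (a / 2)).sum := by
  rcases Nat.eq_zero_or_pos a with h | h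
  · simp [h]
  · rw [Nat.digits_def' (by norm_num) h, List.sum_cons]

private lemma dsum_eq_zero {a : ℕ} (h : (Nat.digits 2 a).sum = 0) : a = 0 := by
  induction a using Nat.strong_induction_on with
  | _ a ih =>
    rcases Nat.eq_zero_or_pos a with h0 | h0
    · exact h0
    · rw [dsum_step] at h
      have h1 : a % 2 = 0 := by omega
      have h2 := ih (a / 2) (Nat.div_lt_self h0 (by norm_num)) (by omega)
      omega

private lemma dsum_pow_s13 (i : ℕ) : (Nat.digits 2 (2 ^ i)).sum = 1 := by
  induction i with
  | zero => simp
  | succ n ih =>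
    rw [dsum_step]
    have h1 : 2 ^ (n + 1) % 2 = 0 := by simp [pow_succ, Nat.mul_mod_left]
    have h2 : 2 ^ (n + 1) / 2 = 2 ^ n := by
      rw [pow_succ]; exact Nat.mul_div_cancel _ (by norm_num)
    rw [h1, h2, ih]

private lemma dsum_eq_one {a : ℕ} (h : (Nat.digits 2 a).sum = 1) : ∃ i, a = 2 ^ i := by
  induction a using Nat.strong_induction_on with
  | _ a ih =>
    have ha : a ≠ 0 := by rintro rfl; simp at h
    rw [dsum_step] at h
    rcases Nat.mod_two_eq_zero_or_one a with h2 | h2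
    · have h3 : (Nat.digits 2 (a / 2)).sum = 1 := by omega
      obtain ⟨i, hi⟩ := ih (a / 2) (Nat.div_lt_self (Nat.pos_of_ne_zero ha) (by norm_num)) h3
      refine ⟨i + 1, ?_⟩
      have := Nat.div_add_mod a 2
      rw [pow_succ]
      omega
    · have h3 : a / 2 = 0 := dsum_eq_zero (by omega)
      refine ⟨0, ?_⟩
      have := Nat.div_add_mod a 2
      omega

private lemma dsum_compl : ∀ k a : ℕ, a < 2 ^ k →
    (Nat.digits 2 a).sum + (Nat.digits 2 (2 ^ k - 1 - a)).sum = k := by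
  intro k
  induction k with
  | zero => intro a ha; interval_cases a; simp
  | succ n ih =>
    intro a ha
    have hpow : 2 ^ (n + 1) = 2 * 2 ^ n := by ring
    have hmod2 : a % 2 < 2 := Nat.mod_lt a (by norm_num)
    have hdm := Nat.div_add_mod a 2
    rw [dsum_step a, dsum_step (2 ^ (n + 1) - 1 - a)]
    have hdiv : (2 ^ (n + 1) - 1 - a) / 2 = 2 ^ n - 1 - a / 2 := by omega
    have hmod : (2 ^ (n + 1) - 1 - a) % 2 = 1 - a % 2 := by omega
    rw [hdiv, hmod]
    have h5 : a / 2 < 2 ^ n := by omega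
    have := ih (a / 2) h5
    omega

set_option maxHeartbeats 1000000 in
theorem stmt_13 (k s t : ℕ) (hs1 : 0 < s) (hs2 : s < 2 ^ k - 1)
    (hgcd : Nat.gcd s (2 ^ k - 1) = 1) (hspow : ¬ ∃ i < k, s = 2 ^ i)
    (ht1 : 0 < t) (ht2 : t < 2 ^ k - 1) (hinv : s * t ≡ 1 [MOD 2 ^ k - 1]) :
    wt (2 * k) ((2 ^ k - 1 - t : ℕ) : ℤ)
        + wt (2 * k) (-(((2 ^ k - 1 - t : ℕ) : ℤ) * ((2 ^ k + 1) * s : ℕ)))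
      = wt (2 * k) ((2 ^ k - 1 - t : ℕ) : ℤ) + 2 ∧
    wt (2 * k) ((2 ^ k - 1 - t : ℕ) : ℤ) + 2 ≤ k := by
  have hk : 2 ≤ k := by by_contra h; interval_cases k <;> omega
  have hpk : (3:ℕ) ≤ 2 ^ k := by
    calc (3:ℕ) ≤ 2 ^ 2 := by norm_num
    _ ≤ 2 ^ k := Nat.pow_le_pow_right (by norm_num) hk
  -- s*t = 1 + c * (2^k - 1)
  have hm1 : 1 % (2 ^ k - 1) = 1 := Nat.mod_eq_of_lt (by omega)
  have hst : s * t % (2 ^ k - 1) = 1 := by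
    have h := hinv; unfold Nat.ModEq at h; omega
  set c := s * t / (2 ^ k - 1) with hc
  have hstc : s * t = 1 + c * (2 ^ k - 1) := by
    have h := Nat.div_add_mod (s * t) (2 ^ k - 1)
    rw [hst, ← hc, mul_comm] at h
    omega
  -- modulus facts
  have hkk : (2:ℕ) ^ k ≤ 2 ^ (2 * k) := Nat.pow_le_pow_right (by norm_num) (by omega)
  have hkk2 : 2 * (2:ℕ) ^ k ≤ 2 ^ (2 * k) := by
    have : (2:ℕ) ^ (k + 1) ≤ 2 ^ (2 * k) := Nat.pow_le_pow_right (by norm_num) (by omega)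
    rw [pow_succ] at this; omega
  have hfactor : ((2:ℤ) ^ k + 1) * (2 ^ k - 1) = 2 ^ (2 * k) - 1 := by
    rw [two_mul, pow_add]; ring
  -- second argument reduces to 2^k + 1
  have hx : -(((2 ^ k - 1 - t : ℕ) : ℤ) * ((2 ^ k + 1) * s : ℕ))
      = (2 ^ k + 1) + ((c:ℤ) - s) * (2 ^ (2 * k) - 1) := by
    have h1 : ((2 ^ k - 1 - t : ℕ) : ℤ) = 2 ^ k - 1 - t := by
      push_cast [Nat.cast_sub (by omega : t ≤ 2 ^ k - 1), Nat.cast_sub (by omega : 1 ≤ 2 ^ k)]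
      ring
    have h2 : (((2 ^ k + 1) * s : ℕ) : ℤ) = (2 ^ k + 1) * s := by push_cast; ring
    have h3 : (s:ℤ) * t = 1 + c * ((2:ℤ) ^ k - 1) := by
      have h4 : ((s * t : ℕ) : ℤ) = ((1 + c * (2 ^ k - 1) : ℕ) : ℤ) := by
        exact_mod_cast congrArg (fun x : ℕ => (x : ℤ)) hstc
      push_cast [Nat.cast_sub (by omega : 1 ≤ 2 ^ k)] at h4
      push_cast
      linarith
    rw [h1, h2, ← hfactor]
    linear_combination ((2:ℤ) ^ k + 1) * h3
  have hxmod : (-(((2 ^ k - 1 - t : ℕ) : ℤ) * ((2 ^ k + 1) * s : ℕ))) % (2 ^ (2 * k) - 1)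
      = 2 ^ k + 1 := by
    rw [hx, Int.add_mul_emod_self_right]
    apply Int.emod_eq_of_lt
    · positivity
    · have : (2:ℤ) * 2 ^ k ≤ 2 ^ (2 * k) := by exact_mod_cast hkk2
      have h3 : (3:ℤ) ≤ 2 ^ k := by exact_mod_cast hpk
      omega
  -- weight of second term is 2
  have hwt2 : wt (2 * k) (-(((2 ^ k - 1 - t : ℕ) : ℤ) * ((2 ^ k + 1) * s : ℕ))) = 2 := by
    unfold wt
    rw [hxmod]
    have ht : ((2:ℤ) ^ k + 1).toNat = 2 ^ k + 1 := by
      have : ((2:ℤ) ^ k) = ((2 ^ k : ℕ) : ℤ) := by push_cast; ring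
      omega
    rw [ht, dsum_step]
    have h1 : (2 ^ k + 1) % 2 = 1 := by
      have : 2 ^ k % 2 = 0 := by
        have : (2:ℕ) ∣ 2 ^ k := dvd_pow_self 2 (by omega)
        omega
      omega
    have h2 : (2 ^ k + 1) / 2 = 2 ^ (k - 1) := by
      have : 2 ^ k = 2 * 2 ^ (k - 1) := by
        rw [← pow_succ']
        congr 1
        omega
      omega
    rw [h1, h2, dsum_pow_s13]
  -- weight of first term
  have hwt1 : wt (2 * k) ((2 ^ k - 1 - t : ℕ) : ℤ)
      = (Nat.digits 2 (2 ^ k - 1 - t)).sum := by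
    unfold wt
    have h1 : ((2 ^ k - 1 - t : ℕ) : ℤ) % (2 ^ (2 * k) - 1) = ((2 ^ k - 1 - t : ℕ) : ℤ) := by
      apply Int.emod_eq_of_lt
      · positivity
      · have hlt : (2 ^ k - 1 - t : ℕ) < 2 ^ (2 * k) - 1 := by omega
        have h10 := (Nat.cast_lt (α := ℤ)).mpr hlt
        have h11 : ((2 ^ (2 * k) - 1 : ℕ) : ℤ) = 2 ^ (2 * k) - 1 := by
          push_cast [Nat.cast_sub (Nat.one_le_two_pow : 1 ≤ 2 ^ (2 * k))]
          ring
        rwa [h11] at h10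
    rw [h1, Int.toNat_natCast]
  -- wt(t) ≥ 2
  have hwt_t : 2 ≤ (Nat.digits 2 t).sum := by
    by_contra h
    push_neg at h
    interval_cases ht : (Nat.digits 2 t).sum
    · exact absurd (dsum_eq_zero ht) (by omega)
    · obtain ⟨i, rfl⟩ := dsum_eq_one ht
      -- derive s = 2 ^ (k - i), contradiction
      have hik : i < k := by
        by_contra hik
        push_neg at hik
        have : 2 ^ k ≤ 2 ^ i := Nat.pow_le_pow_right (by norm_num) hik
        omega
      have h2k : (1:ℕ) ≡ 2 ^ k [MOD 2 ^ k - 1] :=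
        (Nat.modEq_iff_dvd' (by omega)).mpr dvd_rfl
      have hmain : s ≡ 2 ^ (k - i) [MOD 2 ^ k - 1] := by
        have e1 : s * 2 ^ k = (s * 2 ^ i) * 2 ^ (k - i) := by
          rw [mul_assoc, ← pow_add]; congr 2; omega
        calc s = s * 1 := (mul_one s).symm
        _ ≡ s * 2 ^ k [MOD 2 ^ k - 1] := h2k.mul_left s
        _ = (s * 2 ^ i) * 2 ^ (k - i) := e1
        _ ≡ 1 * 2 ^ (k - i) [MOD 2 ^ k - 1] := hinv.mul_right _
        _ = 2 ^ (k - i) := one_mul _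
      have hmodeq : s % (2 ^ k - 1) = 2 ^ (k - i) % (2 ^ k - 1) := hmain
      rcases Nat.eq_zero_or_pos i with hi0 | hi0
      · -- i = 0 : s ≡ 2^k ≡ 1, so s = 1
        subst hi0
        have h2k0 : 2 ^ (k - 0) % (2 ^ k - 1) = 1 := by
          simp only [Nat.sub_zero]
          have e0 := Nat.add_mul_mod_self_right 1 1 (2 ^ k - 1)
          rw [show 1 + 1 * (2 ^ k - 1) = 2 ^ k by omega, hm1] at e0
          exact e0
        have hs' : s % (2 ^ k - 1) = s := Nat.mod_eq_of_lt hs2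
        exact hspow ⟨0, by omega, by omega⟩
      · -- i ≥ 1 : s = 2^(k-i)
        have hlt : 2 ^ (k - i) < 2 ^ k - 1 := by
          have h6 : 2 ^ (k - i) ≤ 2 ^ (k - 1) := Nat.pow_le_pow_right (by norm_num) (by omega)
          have h7 : 2 ^ k = 2 * 2 ^ (k - 1) := by
            rw [← pow_succ']; congr 1; omega
          have h8 : 2 ≤ 2 ^ (k - 1) := by
            calc 2 = 2 ^ 1 := by norm_num
            _ ≤ 2 ^ (k - 1) := Nat.pow_le_pow_right (by norm_num) (by omega)
          omega
        have hs' : s % (2 ^ k - 1) = s := Nat.mod_eq_of_lt hs2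
        have hp' : 2 ^ (k - i) % (2 ^ k - 1) = 2 ^ (k - i) := Nat.mod_eq_of_lt hlt
        exact hspow ⟨k - i, by omega, by omega⟩
  -- conclude
  have hcompl := dsum_compl k t (by omega)
  constructor
  · rw [hwt2]
  · rw [hwt1]; omega
end

section
/- Let k ≥ 3 and let j = ĵ·(2^k + 1) with 0 < ĵ < 2^k − 1. If ĵ is not a power of 2, then the binary Hamming weight of j (as an integer in [0, 2^{2k} − 1)) is strictly greater than 2. -/
lemma one_le_digits_sum (n : ℕ) (h1 : 0 < n) : 1 ≤ (Nat.digits 2 n).sum := by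
  by_contra hc
  push_neg at hc
  have hsum : (Nat.digits 2 n).sum = 0 := by omega
  have hne : Nat.digits 2 n ≠ [] := Nat.digits_ne_nil_iff_ne_zero.mpr h1.ne'
  have hlast := Nat.getLast_digit_ne_zero 2 h1.ne'
  have := (List.sum_eq_zero_iff.mp hsum) _ (List.getLast_mem hne)
  exact hlast this

lemma two_le_digits_sum (n : ℕ) (h1 : 0 < n) (hpow : ¬ ∃ i, n = 2 ^ i) :
    2 ≤ (Nat.digits 2 n).sum := by
  induction n using Nat.strong_induction_on with
  | _ n IH =>
    rw [Nat.digits_def' (by norm_num : 1 < 2) h1, List.sum_cons]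
    have hdiv : n / 2 < n := Nat.div_lt_self h1 (by norm_num)
    rcases Nat.even_or_odd n with he | ho
    · have hm2 : n % 2 = 0 := Nat.even_iff.mp he
      have hpos : 0 < n / 2 := by omega
      have hnp : ¬ ∃ i, n / 2 = 2 ^ i := by
        rintro ⟨i, hi⟩
        exact hpow ⟨i + 1, by omega⟩
      have := IH _ hdiv hpos hnp
      omega
    · have hm2 : n % 2 = 1 := Nat.odd_iff.mp ho
      have hpos : 0 < n / 2 := by
        rcases Nat.eq_zero_or_pos (n / 2) with h | h
        · exfalso; exact hpow ⟨0, by omega⟩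
        · exact h
      have := one_le_digits_sum (n / 2) hpos
      omega

theorem stmt_16 (k jh : ℕ) (hk : 3 ≤ k) (h1 : 0 < jh) (h2 : jh < 2 ^ k - 1)
    (hpow : ¬ ∃ i, jh = 2 ^ i) :
    2 < (Nat.digits 2 (jh * (2 ^ k + 1))).sum := by
  set L := (Nat.digits 2 jh).length with hL
  have hlen : L ≤ k := by
    rw [hL, Nat.digits_len 2 jh (by norm_num) h1.ne']
    have : Nat.log 2 jh < k := Nat.log_lt_of_lt_pow h1.ne' (by omega)
    omega
  have key := Nat.digits_append_zeroes_append_digits (k := k - L) (m := jh) (n := jh)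
    (by norm_num : 1 < 2) h1
  rw [show L + (k - L) = k from by omega] at key
  have heq : jh + 2 ^ k * jh = jh * (2 ^ k + 1) := by ring
  rw [heq] at key
  rw [← key]
  simp only [List.sum_append, List.sum_replicate, smul_zero, add_zero]
  have := two_le_digits_sum jh h1 hpow
  omega
end

section
/- Let n ≥ 1 and let f, g, h be integers with 0 ≤ f, g, h < 2^n − 1 and h ≡ f + g (mod 2^n − 1). Then wt(f) + wt(g) ≥ wt(h), where wt denotes the number of ones in the n-bit binary expansion. -/
lemma S_rec (m : ℕ) :
    (Nat.digits 2 m).sum = m % 2 + (Nat.digits 2 (m / 2)).sum := by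
  rcases Nat.eq_zero_or_pos m with h | h
  · simp [h]
  · rw [Nat.digits_def' (by norm_num : 1 < 2) h]
    simp

lemma key_s18 : ∀ N a b c : ℕ, a + b + c ≤ N → c ≤ 1 →
    (Nat.digits 2 (a + b + c)).sum ≤
      (Nat.digits 2 a).sum + (Nat.digits 2 b).sum + c := by
  intro N
  induction N with
  | zero =>
    intro a b c hN hc
    have ha : a = 0 := by omega
    have hb : b = 0 := by omega
    have hcc : c = 0 := by omega
    simp [ha, hb, hcc]
  | succ N ih =>
    intro a b c hN hc
    rcases Nat.eq_zero_or_pos (a + b + c) with hm | hm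
    · have ha : a = 0 := by omega
      have hb : b = 0 := by omega
      have hcc : c = 0 := by omega
      simp [ha, hb, hcc]
    · set m := a + b + c with hmdef
      have hdiv : m / 2 = a / 2 + b / 2 + (a % 2 + b % 2 + c) / 2 := by omega
      have hc' : (a % 2 + b % 2 + c) / 2 ≤ 1 := by omega
      have hle : a / 2 + b / 2 + (a % 2 + b % 2 + c) / 2 ≤ N := by omega
      have ihh := ih (a / 2) (b / 2) ((a % 2 + b % 2 + c) / 2) hle hc'
      rw [S_rec m, hdiv]
      have hSa := S_rec a
      have hSb := S_rec b
      omega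

lemma S_pow_add (n : ℕ) : ∀ h : ℕ, h < 2 ^ n →
    (Nat.digits 2 (h + 2 ^ n)).sum = (Nat.digits 2 h).sum + 1 := by
  induction n with
  | zero =>
    intro h hh
    have : h = 0 := by omega
    simp [this]
  | succ n ih =>
    intro h hh
    have h2 : h + 2 ^ (n + 1) = 2 * (h / 2 + 2 ^ n) + h % 2 := by
      have := Nat.div_add_mod h 2
      ring_nf
      omega
    have hlt : h / 2 < 2 ^ n := by
      have : h < 2 * 2 ^ n := by
        have : 2 ^ (n + 1) = 2 * 2 ^ n := by ring
        omega
      omega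
    rw [h2, S_rec, S_rec h]
    have hmod : (2 * (h / 2 + 2 ^ n) + h % 2) % 2 = h % 2 := by omega
    have hdiv : (2 * (h / 2 + 2 ^ n) + h % 2) / 2 = h / 2 + 2 ^ n := by omega
    rw [hmod, hdiv, ih (h / 2) hlt]
    omega

theorem stmt_18 (n f g h : ℕ) (hn : 1 ≤ n)
    (hf : f < 2 ^ n - 1) (hg : g < 2 ^ n - 1) (hh : h < 2 ^ n - 1)
    (hmod : h ≡ f + g [MOD 2 ^ n - 1]) :
    (Nat.digits 2 h).sum ≤ (Nat.digits 2 f).sum + (Nat.digits 2 g).sum := by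
  have h2n : 2 ≤ 2 ^ n := by
    calc 2 = 2 ^ 1 := by norm_num
    _ ≤ 2 ^ n := Nat.pow_le_pow_right (by norm_num) hn
  set M := 2 ^ n - 1 with hM
  have hM1 : 1 ≤ M := by omega
  have hmodeq : h % M = (f + g) % M := hmod
  rw [Nat.mod_eq_of_lt hh] at hmodeq
  by_cases hcase : f + g < M
  · rw [Nat.mod_eq_of_lt hcase] at hmodeq
    subst hmodeq
    have := key_s18 (f + g) f g 0 (by omega) (by omega)
    simpa using this
  · have hfg2 : f + g < 2 * M := by omega
    have : (f + g) % M = f + g - M := by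
      rw [Nat.mod_eq_sub_mod (by omega), Nat.mod_eq_of_lt (by omega)]
    rw [this] at hmodeq
    have hsum : h + 2 ^ n = f + g + 1 := by omega
    have hlt : h < 2 ^ n := by omega
    have h1 := S_pow_add n h hlt
    rw [hsum] at h1
    have h2 := key_s18 (f + g + 1) f g 1 (by omega) (by omega)
    omega
end

section
/- Let n = 2k and let t = gcd(s, 2^k − 1) > 1 for some 0 < s < 2^k − 1, and set d = (2^k + 1)s. Then for j = (2^k − 1)/t one has 0 < j < 2^k − 1, j·d ≡ 0 (mod 2^n − 1), and wt(j) + wt(−j d mod (2^n − 1)) = wt(j) < k. -/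
lemma digitsum_le (k : ℕ) : ∀ j < 2 ^ k, (Nat.digits 2 j).sum ≤ k := by
  induction k with
  | zero => intro j hj; interval_cases j; simp
  | succ k ih =>
    intro j hj
    rcases Nat.eq_zero_or_pos j with rfl | hj0
    · simp
    · rw [Nat.digits_def' (by norm_num) hj0]
      simp only [List.sum_cons]
      have h1 : j / 2 < 2 ^ k := by
        have : 2 ^ (k + 1) = 2 ^ k * 2 := pow_succ 2 k
        omega
      have := ih (j / 2) h1
      omega

lemma digitsum_lt (k : ℕ) : ∀ j < 2 ^ k - 1, (Nat.digits 2 j).sum < k := by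
  induction k with
  | zero => intro j hj; omega
  | succ k ih =>
    intro j hj
    have hpow : 2 ^ (k + 1) = 2 ^ k * 2 := pow_succ 2 k
    rcases Nat.eq_zero_or_pos j with rfl | hj0
    · simp only [Nat.digits_zero, List.sum_nil]; omega
    · rw [Nat.digits_def' (by norm_num) hj0]
      simp only [List.sum_cons]
      rcases Nat.even_or_odd j with he | ho
      · have h2 : j % 2 = 0 := Nat.even_iff.mp he
        have h1 : j / 2 < 2 ^ k := by omega
        have := digitsum_le k (j / 2) h1
        omega
      · have h2 : j % 2 = 1 := Nat.odd_iff.mp ho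
        have h1 : j / 2 < 2 ^ k - 1 := by omega
        have := ih (j / 2) h1
        omega

theorem stmt_19 (k s : ℕ) (hs1 : 0 < s) (hs2 : s < 2 ^ k - 1)
    (ht : 1 < Nat.gcd s (2 ^ k - 1)) :
    0 < (2 ^ k - 1) / Nat.gcd s (2 ^ k - 1) ∧
    (2 ^ k - 1) / Nat.gcd s (2 ^ k - 1) < 2 ^ k - 1 ∧
    (2 ^ (2 * k) - 1) ∣ ((2 ^ k - 1) / Nat.gcd s (2 ^ k - 1)) * ((2 ^ k + 1) * s) ∧
    wt (2 * k) (((2 ^ k - 1) / Nat.gcd s (2 ^ k - 1) : ℕ) : ℤ)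
        + wt (2 * k) (-((((2 ^ k - 1) / Nat.gcd s (2 ^ k - 1) : ℕ) : ℤ)
            * (((2 ^ k + 1) * s : ℕ) : ℤ)))
      = wt (2 * k) (((2 ^ k - 1) / Nat.gcd s (2 ^ k - 1) : ℕ) : ℤ) ∧
    wt (2 * k) (((2 ^ k - 1) / Nat.gcd s (2 ^ k - 1) : ℕ) : ℤ) < k := by
  set g := Nat.gcd s (2 ^ k - 1) with hg
  have hgd : g ∣ 2 ^ k - 1 := Nat.gcd_dvd_right _ _
  have hgs : g ∣ s := Nat.gcd_dvd_left _ _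
  have hM : 1 < 2 ^ k - 1 := lt_of_lt_of_le ht (Nat.le_of_dvd (by omega) hgd)
  set j := (2 ^ k - 1) / g with hj
  have hj1 : 0 < j := Nat.div_pos (Nat.le_of_dvd (by omega) hgd) (by omega)
  have hj2 : j < 2 ^ k - 1 := Nat.div_lt_self (by omega) ht
  -- divisibility
  have hfact : 2 ^ (2 * k) - 1 = (2 ^ k - 1) * (2 ^ k + 1) := by
    have h2 : 2 ^ (2 * k) = 2 ^ k * 2 ^ k := by rw [two_mul, pow_add]
    obtain ⟨a, ha⟩ := Nat.exists_eq_add_of_le (Nat.one_le_two_pow : 1 ≤ 2 ^ k)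
    rw [h2, ha]
    have : (1 + a) * (1 + a) = a * (a + 2) + 1 := by ring
    have h3 : (1 + a - 1) * (1 + a + 1) = a * (a + 2) := by
      congr 1 <;> omega
    omega
  obtain ⟨m, hm⟩ := hgs
  have hdvd : (2 ^ (2 * k) - 1) ∣ j * ((2 ^ k + 1) * s) := by
    refine ⟨m, ?_⟩
    rw [hfact, hm, hj]
    rw [show (2 ^ k - 1) / g * ((2 ^ k + 1) * (g * m)) =
      ((2 ^ k - 1) / g * g) * ((2 ^ k + 1) * m) by ring, Nat.div_mul_cancel hgd]
    ring
  -- M as integer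
  have hMpos : (0:ℤ) < 2 ^ (2 * k) - 1 := by
    have : (2:ℤ) ^ k ≤ 2 ^ (2 * k) := pow_le_pow_right₀ (by norm_num) (by omega)
    have h2 : (2:ℕ) ^ k - 1 < 2 ^ k := by omega
    have : (1:ℤ) < 2 ^ k := by exact_mod_cast (by omega : (1:ℕ) < 2 ^ k)
    linarith
  have hMcast : ((2 ^ (2 * k) - 1 : ℕ) : ℤ) = 2 ^ (2 * k) - 1 := by
    push_cast [Nat.cast_sub (Nat.one_le_two_pow)]; ring
  have hjM : (j:ℤ) < 2 ^ (2 * k) - 1 := by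
    have h1 : j < 2 ^ (2 * k) - 1 := by
      have : 2 ^ k ≤ 2 ^ (2 * k) := Nat.pow_le_pow_right (by norm_num) (by omega)
      omega
    rw [← hMcast]
    exact_mod_cast h1
  have hwtj : wt (2 * k) ((j:ℕ) : ℤ) = (Nat.digits 2 j).sum := by
    unfold wt
    rw [Int.emod_eq_of_lt (by positivity) hjM]
    simp [Int.toNat_natCast]
  have hwtneg : wt (2 * k) (-((j:ℤ) * (((2 ^ k + 1) * s : ℕ) : ℤ))) = 0 := by
    unfold wt
    have hdZ : ((2:ℤ) ^ (2 * k) - 1) ∣ ((j:ℤ) * (((2 ^ k + 1) * s : ℕ) : ℤ)) := by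
      rw [← hMcast]
      exact_mod_cast hdvd
    rw [Int.emod_eq_zero_of_dvd hdZ.neg_right]
    simp
  refine ⟨hj1, hj2, hdvd, ?_, ?_⟩
  · rw [hwtneg]; ring
  · rw [hwtj]; exact digitsum_lt k j hj2
end
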